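/- arXiv:1404.5430 — 8 statements merged into one kernel-verified Lean document; each statement's English description precedes it below -/
import Mathlib

section
/- In the group presented by generators t_i for i ∈ ℤ and s_3 with relations t_i t_{i-1} = t_j t_{j-1} for all i, j ∈ ℤ and s_3 t_i s_3 = t_i s_3 t_i for all i ∈ ℤ, the relation s_3 (t_1 t_0) s_3 (t_1 t_0) = (t_1 t_0) s_3 (t_1 t_0) s_3 holds. -/
/-- In the group presented by generators `t i` (`i ∈ ℤ`) and `s₃` with relations
`t i * t (i-1) = t j * t (j-1)` and `s₃ * t i * s₃ = t i * s₃ * t i`, the relation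
`s₃ (t 1 t 0) s₃ (t 1 t 0) = (t 1 t 0) s₃ (t 1 t 0) s₃` holds.  (Equivalently, the
identity holds in every group containing such elements.) -/
theorem stmt0 {G : Type*} [Group G] (t : ℤ → G) (s : G)
    (hQ1 : ∀ i j : ℤ, t i * t (i - 1) = t j * t (j - 1))
    (hQ2 : ∀ i : ℤ, s * t i * s = t i * s * t i) :
    s * (t 1 * t 0) * s * (t 1 * t 0) = (t 1 * t 0) * s * (t 1 * t 0) * s := by
  have e21 : t 2 * t 1 = t 1 * t 0 := by
    have h := hQ1 2 1
    norm_num at h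
    exact h
  have b0 := hQ2 0
  have b1 := hQ2 1
  have b2 := hQ2 2
  calc s * (t 1 * t 0) * s * (t 1 * t 0)
      = s * (t 2 * t 1) * s * (t 1 * t 0) := by rw [e21]
    _ = s * t 2 * (t 1 * s * t 1) * t 0 := by group
    _ = s * t 2 * (s * t 1 * s) * t 0 := by rw [b1]
    _ = (s * t 2 * s) * (t 1 * s * t 0) := by group
    _ = (t 2 * s * t 2) * (t 1 * s * t 0) := by rw [b2]
    _ = t 2 * s * (t 2 * t 1) * (s * t 0) := by group
    _ = t 2 * s * (t 1 * t 0) * (s * t 0) := by rw [e21]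
    _ = t 2 * (s * t 1) * (t 0 * s * t 0) := by group
    _ = t 2 * (s * t 1) * (s * t 0 * s) := by rw [← b0]
    _ = t 2 * (s * t 1 * s) * (t 0 * s) := by group
    _ = t 2 * (t 1 * s * t 1) * (t 0 * s) := by rw [b1]
    _ = (t 2 * t 1) * s * (t 1 * t 0) * s := by group
    _ = (t 1 * t 0) * s * (t 1 * t 0) * s := by rw [e21]
end

section
/- In a group, assume elements t_i (i ∈ ℤ) and s satisfy t_i t_{i-1} = t_j t_{j-1} for all i, j, and additionally s t_0 s = t_0 s t_0, s t_1 s = t_1 s t_1, and s (t_1 t_0) s (t_1 t_0) = (t_1 t_0) s (t_1 t_0) s. Then s t_i s = t_i s t_i holds for all i ∈ ℤ. -/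
/-!
All consecutive products `t (k + 1) * t k` equal `Δ = t 1 * t 0`, so
`t (k + 2) = t (k + 1) * t k * (t (k + 1))⁻¹` and `t (k - 1) = (t k)⁻¹ * t (k + 1) * t k`.
If `s` braids with `a` and `b` and (P4) holds for `a * b`, then `s` braids with
`a * b * a⁻¹` and with `b⁻¹ * a * b`; applied to `(a, b) = (t (k + 1), t k)`, this propagates
the braid relations from `t 0, t 1` to all of `ℤ`, two neighbours at a time.
-/

open MulOpposite

theorem braid_conj {G : Type*} [Group G] {s a b : G}
    (ha : s * a * s = a * s * a) (hb : s * b * s = b * s * b)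
    (hab : s * (a * b) * s * (a * b) = a * b * s * (a * b) * s) :
    s * (a * b * a⁻¹) * s = a * b * a⁻¹ * s * (a * b * a⁻¹) :=
  calc s * (a * b * a⁻¹) * s
      = s * a * b * a⁻¹ * (s * a * s) * s⁻¹ * a⁻¹ := by group
    _ = s * (a * b) * s * (a * b) * b⁻¹ * s⁻¹ * a⁻¹ := by rw [ha]; group
    _ = a * b * s * a * s⁻¹ * (s * b * s) * b⁻¹ * s⁻¹ * a⁻¹ := by rw [hab]; group
    _ = a * b * a⁻¹ * (a * s * a) * s⁻¹ * b * a⁻¹ := by rw [hb]; group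
    _ = a * b * a⁻¹ * s * (a * b * a⁻¹) := by rw [← ha]; group

theorem braid_conj_inv {G : Type*} [Group G] {s a b : G}
    (ha : s * a * s = a * s * a) (hb : s * b * s = b * s * b)
    (hab : s * (a * b) * s * (a * b) = a * b * s * (a * b) * s) :
    s * (b⁻¹ * a * b) * s = b⁻¹ * a * b * s * (b⁻¹ * a * b) := by
  -- `braid_conj` in `Gᵐᵒᵖ` for the pair `(op b, op a)`: all three hypotheses are palindromic.
  have hop := braid_conj (s := op s) (a := op b) (b := op a)
    (by simpa [← op_mul, mul_assoc] using congrArg op hb)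
    (by simpa [← op_mul, mul_assoc] using congrArg op ha)
    (by simpa [← op_mul, mul_assoc] using congrArg op hab.symm)
  simpa [← op_mul, ← op_inv, mul_assoc] using hop

/-- If elements `t i` (`i ∈ ℤ`) and `s` of a group satisfy (Q1), (P2) for `i = 0, 1`
and (P4), then `s * t i * s = t i * s * t i` holds for all `i ∈ ℤ`. -/
theorem stmt1 {G : Type*} [Group G] (t : ℤ → G) (s : G)
    (hQ1 : ∀ i j : ℤ, t i * t (i - 1) = t j * t (j - 1))
    (hP2_0 : s * t 0 * s = t 0 * s * t 0)
    (hP2_1 : s * t 1 * s = t 1 * s * t 1)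
    (hP4 : s * (t 1 * t 0) * s * (t 1 * t 0) = (t 1 * t 0) * s * (t 1 * t 0) * s) :
    ∀ i : ℤ, s * t i * s = t i * s * t i := by
  have hΔ (k : ℤ) : t (k + 1) * t k = t 1 * t 0 := by simpa using hQ1 (k + 1) 1
  have hP4' (k : ℤ) := hΔ k ▸ hP4
  have hup (k : ℤ) : t (k + 2) = t (k + 1) * t k * (t (k + 1))⁻¹ := by
    rw [eq_mul_inv_iff_mul_eq, hΔ k]
    simpa [add_assoc] using hΔ (k + 1)
  have hdown (k : ℤ) : t (k - 1) = (t k)⁻¹ * t (k + 1) * t k := by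
    rw [mul_assoc, eq_inv_mul_iff_mul_eq, hΔ k, ← hΔ (k - 1), sub_add_cancel]
  intro i
  suffices s * t i * s = t i * s * t i ∧ s * t (i + 1) * s = t (i + 1) * s * t (i + 1) from this.1
  induction i using Int.inductionOn' (b := 0) with
  | zero => exact ⟨hP2_0, hP2_1⟩
  | succ k _ ih =>
    refine ⟨ih.2, ?_⟩
    rw [add_assoc, one_add_one_eq_two, hup]
    exact braid_conj ih.2 ih.1 (hP4' k)
  | pred k _ ih =>
    refine ⟨?_, by rw [sub_add_cancel]; exact ih.1⟩
    rw [hdown]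
    exact braid_conj_inv ih.2 ih.1 (hP4' k)
end

section
/- In a group containing elements z and t_i (i ∈ ℤ) satisfying t_i t_{i-1} = t_j t_{j-1} for all i, j ∈ ℤ, the condition 'z t_i = t_{i-e} z for all i ∈ ℤ' is equivalent to the conjunction of 'z t_1 t_0 = t_1 t_0 z' and 'z ⟨t_1 t_0⟩^e = t_0 z ⟨t_1 t_0⟩^{e-1}', where ⟨t_1 t_0⟩^k denotes the alternating product t_1 t_0 t_1 t_0 ⋯ with k factors. -/
/-!
Write `c = t 1 * t 0`. By (Q1) every product `t i * t (i - 1)` equals `c`, so the sequence `t` is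
determined by any single term (`t (i + 1) = c * (t i)⁻¹`), and `t (i - 2 m) = c⁻ᵐ * t i * cᵐ`.
If `z` commutes with `c`, both `i ↦ z * t i * z⁻¹` and `i ↦ t (i - e)` are again sequences with
consecutive products `c`, so they agree everywhere as soon as they agree at `i = 1`. Conversely
the conjugation relation forces `z` to commute with `c`. Finally, since `⟨t 1 t 0⟩^(2m) = cᵐ` and
`⟨t 1 t 0⟩^(2m+1) = cᵐ * t 1`, the relation at `i = 1` is the second condition rewritten,
separately for each parity of `e`.
-/

section Alternating

variable {G : Type*} [Group G] {a b : G} {f : ℕ → G}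

theorem alternating_even_odd (hf0 : f 0 = 1)
    (hfsucc : ∀ k : ℕ, f (k + 1) = f k * (if k % 2 = 0 then a else b)) (m : ℕ) :
    f (2 * m) = (a * b) ^ m ∧ f (2 * m + 1) = (a * b) ^ m * a := by
  induction m with
  | zero => simp [hfsucc, hf0]
  | succ m ih =>
    have heven : f (2 * (m + 1)) = (a * b) ^ (m + 1) := by
      rw [show 2 * (m + 1) = 2 * m + 1 + 1 by ring, hfsucc, ih.2, if_neg (by omega), pow_succ,
        mul_assoc]
    exact ⟨heven, by rw [hfsucc, heven, if_pos (by omega)]⟩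

end Alternating

section ConstantPairProduct

variable {G : Type*} [Group G] {c : G} {s s' : ℤ → G}

theorem pred_eq_of_mul_pred (hs : ∀ i, s i * s (i - 1) = c) (i : ℤ) : s (i - 1) = (s i)⁻¹ * c :=
  eq_inv_mul_of_mul_eq (hs i)

theorem succ_eq_of_mul_pred (hs : ∀ i, s i * s (i - 1) = c) (i : ℤ) : s (i + 1) = c * (s i)⁻¹ :=
  eq_mul_inv_of_mul_eq (by simpa using hs (i + 1))

theorem sub_two_mul_eq_of_mul_pred (hs : ∀ i, s i * s (i - 1) = c) (i : ℤ) (m : ℕ) :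
    s (i - 2 * m) = (c ^ m)⁻¹ * s i * c ^ m := by
  induction m with
  | zero => simp
  | succ m ih =>
    rw [show i - 2 * ((m + 1 : ℕ) : ℤ) = i - 2 * m - 1 - 1 by push_cast; ring,
      pred_eq_of_mul_pred hs, pred_eq_of_mul_pred hs, ih]
    group

theorem eq_of_mul_pred_of_eq_at (hs : ∀ i, s i * s (i - 1) = c)
    (hs' : ∀ i, s' i * s' (i - 1) = c) {k : ℤ} (hk : s k = s' k) : s = s' := by
  funext i
  induction i using Int.inductionOn' (b := k) with
  | zero => exact hk
  | succ i _ ih => rw [succ_eq_of_mul_pred hs, succ_eq_of_mul_pred hs', ih]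
  | pred i _ ih => rw [pred_eq_of_mul_pred hs, pred_eq_of_mul_pred hs', ih]

theorem conj_mul_pred (hs : ∀ i, s i * s (i - 1) = c) {z : G} (hz : Commute z c) (i : ℤ) :
    z * s i * z⁻¹ * (z * s (i - 1) * z⁻¹) = c := by
  rw [← mul_inv_eq_of_eq_mul hz.eq, ← hs i]; group

theorem mul_eq_sub_mul_iff (hs : ∀ i, s i * s (i - 1) = s 1 * s 0) {z : G}
    (hz : Commute z (s 1 * s 0)) {f : ℕ → G} (hf0 : f 0 = 1)
    (hfsucc : ∀ k : ℕ, f (k + 1) = f k * (if k % 2 = 0 then s 1 else s 0)) {e : ℕ} (he : 1 ≤ e) :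
    z * s 1 = s (1 - e) * z ↔ z * f e = s 0 * z * f (e - 1) := by
  have hf := alternating_even_odd hf0 hfsucc
  set c := s 1 * s 0
  obtain ⟨m, rfl | rfl⟩ : ∃ m, e = 2 * m + 1 ∨ e = 2 * (m + 1) := by
    obtain ⟨m, hm | hm⟩ := Nat.even_or_odd' (e - 1)
    exacts [⟨m, .inl (by omega)⟩, ⟨m, .inr (by omega)⟩]
  · have hsub : s (1 - (2 * m + 1 : ℕ)) = (c ^ m)⁻¹ * s 0 * c ^ m := by
      rw [← sub_two_mul_eq_of_mul_pred hs]; congr 1; push_cast; ring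
    rw [Nat.add_sub_cancel, (hf m).1, (hf m).2, hsub, ← mul_right_inj (c ^ m)]
    simp only [mul_assoc, mul_inv_cancel_left, (hz.pow_right m).left_comm, (hz.pow_right m).eq]
  · have hsub : s (1 - (2 * (m + 1) : ℕ)) = (c ^ (m + 1))⁻¹ * s 1 * c ^ (m + 1) := by
      rw [← sub_two_mul_eq_of_mul_pred hs]; push_cast; ring_nf
    have hx : (s 1)⁻¹ * c ^ (m + 1) = s 0 * c ^ m := by
      simp only [c, pow_succ', ← mul_assoc, inv_mul_cancel, one_mul]
    rw [show 2 * (m + 1) - 1 = 2 * m + 1 by omega, (hf (m + 1)).1, (hf m).2, hsub,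
      ← mul_right_inj ((s 1)⁻¹ * c ^ (m + 1)), eq_comm]
    simp only [mul_assoc, mul_inv_cancel_left, inv_mul_cancel_left, (hz.pow_right m).left_comm,
      (hz.pow_right (m + 1)).eq]
    rw [← mul_assoc (s 1)⁻¹, hx, mul_assoc]

end ConstantPairProduct

/-- In a group with elements `z` and `t i` (`i ∈ ℤ`) satisfying (Q1), the condition
`z * t i = t (i - e) * z` for all `i` is equivalent to the conjunction of (R1) and (R2),
where `f k` denotes the alternating product `⟨t 1 * t 0⟩^k` with `k` factors. -/
theorem stmt2 {G : Type*} [Group G] (e : ℕ) (he : 1 ≤ e) (z : G) (t : ℤ → G)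
    (hQ1 : ∀ i j : ℤ, t i * t (i - 1) = t j * t (j - 1))
    (f : ℕ → G) (hf0 : f 0 = 1)
    (hfsucc : ∀ k : ℕ, f (k + 1) = f k * (if k % 2 = 0 then t 1 else t 0)) :
    (∀ i : ℤ, z * t i = t (i - (e : ℤ)) * z) ↔
      (z * (t 1 * t 0) = (t 1 * t 0) * z ∧ z * f e = t 0 * z * f (e - 1)) := by
  have ht : ∀ i, t i * t (i - 1) = t 1 * t 0 := fun i => by simpa using hQ1 i 1
  have hshift : ∀ i, t (i - e) * t (i - 1 - e) = t 1 * t 0 := fun i => by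
    rw [sub_right_comm]; exact ht _
  have hconj : (∀ i : ℤ, z * t i = t (i - e) * z) ↔
      (fun i => z * t i * z⁻¹) = fun i => t (i - e) := by
    simp only [funext_iff, mul_inv_eq_iff_eq_mul]
  rw [hconj]
  constructor
  · intro h
    have h1 : z * t 1 * z⁻¹ = t (1 - e) := congrFun h 1
    have h0 : z * t 0 * z⁻¹ = t (1 - 1 - e) := congrFun h 0
    have hz : Commute z (t 1 * t 0) := by
      refine eq_mul_of_mul_inv_eq ?_
      calc z * (t 1 * t 0) * z⁻¹ = z * t 1 * z⁻¹ * (z * t 0 * z⁻¹) := by group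
        _ = t 1 * t 0 := by rw [h1, h0, hshift]
    exact ⟨hz, (mul_eq_sub_mul_iff ht hz hf0 hfsucc he).mp (eq_mul_of_mul_inv_eq h1)⟩
  · rintro ⟨hz, hR2⟩
    refine eq_of_mul_pred_of_eq_at (conj_mul_pred ht hz) hshift (k := 1) ?_
    exact mul_inv_eq_of_eq_mul ((mul_eq_sub_mul_iff ht hz hf0 hfsucc he).mpr hR2)
end

section
/- In the braid group B_{r+1} with standard Artin generators σ_1, …, σ_r, the elements A t_k A t_{k-1} ⋯ A t_1 and σ_1^{-2k} ε^k coincide for all k ≥ 1, where A = σ_r σ_{r-1} ⋯ σ_3, t_i = σ_1^{-2i} σ_2 σ_1^{2i}, and ε = σ_r ⋯ σ_2 σ_1². -/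
/-- `descProd σ a b = σ b * σ (b-1) * ⋯ * σ a` (equals `1` if `b < a`). -/
def descProd {M : Type*} [Monoid M] (σ : ℕ → M) (a b : ℕ) : M :=
  (((List.range' a (b + 1 - a)).reverse).map σ).prod

/-- In any group with elements `σ 1, …, σ r` satisfying the braid relations
(hence in the braid group `B_{r+1}`), with `A = σ r ⋯ σ 3`,
`t i = σ 1 ^ (-2i) * σ 2 * σ 1 ^ (2i)` and `ε = σ r ⋯ σ 2 * σ 1 ^ 2`, the product
`P k = (A * t k) * (A * t (k-1)) * ⋯ * (A * t 1)` equals `σ 1 ^ (-2k) * ε ^ k`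
for all `k ≥ 1`. -/
theorem stmt7 {M : Type*} [Group M] (r : ℕ) (hr : 2 ≤ r) (σ : ℕ → M)
    (hcomm : ∀ i j : ℕ, 1 ≤ i → i + 1 < j → j ≤ r → σ i * σ j = σ j * σ i)
    (hbraid : ∀ i : ℕ, 1 ≤ i → i + 1 ≤ r →
      σ i * σ (i + 1) * σ i = σ (i + 1) * σ i * σ (i + 1))
    (A ε : M) (hA : A = descProd σ 3 r) (hε : ε = descProd σ 2 r * σ 1 ^ 2)
    (t : ℤ → M) (ht : ∀ i : ℤ, t i = σ 1 ^ (-(2 * i)) * σ 2 * σ 1 ^ (2 * i))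
    (P : ℕ → M) (hP0 : P 0 = 1)
    (hPsucc : ∀ k : ℕ, P (k + 1) = A * t (k + 1) * P k) :
    ∀ k : ℕ, 1 ≤ k → P k = σ 1 ^ (-(2 * (k : ℤ))) * ε ^ k := by
  -- σ 1 commutes with A
  have hA1 : Commute (σ 1) A := by
    rw [hA, descProd]
    apply Commute.list_prod_right
    intro x hx
    rw [List.mem_map] at hx
    obtain ⟨j, hj, rfl⟩ := hx
    rw [List.mem_reverse, List.mem_range'_1] at hj
    have hj1 : 3 ≤ j := hj.1
    have hj2 : j ≤ r := by omega
    exact hcomm 1 j le_rfl (by omega) hj2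
  -- ε = A * σ 2 * σ 1 ^ 2
  have hεA : ε = A * σ 2 * σ 1 ^ 2 := by
    rw [hε, hA, descProd, descProd]
    have h2 : r + 1 - 2 = (r + 1 - 3) + 1 := by omega
    rw [h2, List.range'_succ, List.reverse_cons, List.map_append, List.prod_append]
    simp
  have key : ∀ k : ℕ, P k = σ 1 ^ (-(2 * (k : ℤ))) * ε ^ k := by
    intro k
    induction k with
    | zero => simp [hP0]
    | succ k ih =>
      rw [hPsucc, ih, ht]
      have hcast : ((k + 1 : ℕ) : ℤ) = (k : ℤ) + 1 := by push_cast; ring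
      rw [hcast]
      have hpow : σ 1 ^ (2 * ((k : ℤ) + 1)) * σ 1 ^ (-(2 * (k : ℤ))) = σ 1 ^ 2 := by
        rw [← zpow_add, ← zpow_natCast (σ 1) 2]
        ring_nf
      have hcm : A * σ 1 ^ (-(2 * ((k : ℤ) + 1))) = σ 1 ^ (-(2 * ((k : ℤ) + 1))) * A :=
        ((hA1.zpow_left _).symm).eq
      calc A * (σ 1 ^ (-(2 * ((k : ℤ) + 1))) * σ 2 * σ 1 ^ (2 * ((k : ℤ) + 1))) *
            (σ 1 ^ (-(2 * (k : ℤ))) * ε ^ k)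
          = A * σ 1 ^ (-(2 * ((k : ℤ) + 1))) * σ 2 *
            (σ 1 ^ (2 * ((k : ℤ) + 1)) * σ 1 ^ (-(2 * (k : ℤ)))) * ε ^ k := by
            group
        _ = σ 1 ^ (-(2 * ((k : ℤ) + 1))) * (A * σ 2 * σ 1 ^ 2) * ε ^ k := by
            rw [hpow, hcm]; group
        _ = σ 1 ^ (-(2 * ((k : ℤ) + 1))) * ε ^ (k + 1) := by
            rw [← hεA, pow_succ']; group
  intro k _
  exact key k
end

section
/- In the braid group B_{r+1}, the identity (A t_1 t_0)^{r-1} = σ_1^{-2r} Δ² holds, where A = σ_r ⋯ σ_3, t_i = σ_1^{-2i} σ_2 σ_1^{2i}, and Δ = σ_1 (σ_2 σ_1) ⋯ (σ_r σ_{r-1} ⋯ σ_1) is the Garside half-twist. -/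
namespace Stmt8Aux

/-- `DlP σ a b = d(a,a) d(a,a+1) ⋯ d(a,b)` where `d = descProd σ`. -/
def DlP {M : Type*} [Monoid M] (σ : ℕ → M) (a b : ℕ) : M :=
  ((List.range' a (b + 1 - a)).map (fun k => descProd σ a k)).prod

/-- `DgP σ r a n = d(a,r) d(a+1,r) ⋯ d(a+n-1,r)`. -/
def DgP {M : Type*} [Monoid M] (σ : ℕ → M) (r a n : ℕ) : M :=
  ((List.range' a n).map (fun i => descProd σ i r)).prod

/-- `braidV σ j = σ j σ (j+1) σ j ⁻¹ σ j ⁻¹`. -/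
def braidV {M : Type*} [Group M] (σ : ℕ → M) (j : ℕ) : M :=
  σ j * (σ (j + 1) * ((σ j)⁻¹ * (σ j)⁻¹))

/-- `Wp σ m = braidV σ m * braidV σ (m-1) * ⋯ * braidV σ 1`. -/
def Wp {M : Type*} [Group M] (σ : ℕ → M) : ℕ → M
  | 0 => 1
  | (m + 1) => braidV σ (m + 1) * Wp σ m

section Helpers

variable {M : Type*} [Group M]

lemma swap_mul {x y u v : M} (h : x * y = u * v) (t : M) :
    x * (y * t) = u * (v * t) := by
  rw [← mul_assoc, h, mul_assoc]

lemma braid_swap {x y : M} (h : x * y * x = y * x * y) (w : M) :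
    x * (y * (x * w)) = y * (x * (y * w)) := by
  rw [← mul_assoc, ← mul_assoc, h, mul_assoc, mul_assoc]

lemma semi_inv {x w y : M} (h : x * w = w * y) : x⁻¹ * w = w * y⁻¹ := by
  calc x⁻¹ * w = x⁻¹ * (w * y) * y⁻¹ := by group
    _ = x⁻¹ * (x * w) * y⁻¹ := by rw [h]
    _ = w * y⁻¹ := by group

lemma conj_comm {a b : M} (h : a * b = b * a) : a⁻¹ * b * a = b := by
  rw [semi_inv h, inv_mul_cancel_right]

end Helpers

section DescProd

variable {M : Type*} [Group M] (σ : ℕ → M)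

lemma dP_nil {a b : ℕ} (h : b < a) : descProd σ a b = 1 := by
  have h0 : b + 1 - a = 0 := by omega
  simp [descProd, h0]

lemma dP_singleton (a : ℕ) : descProd σ a a = σ a := by
  have h1 : a + 1 - a = 1 := by omega
  simp [descProd, h1]

lemma dP_succ {a b : ℕ} (h : a ≤ b + 1) :
    descProd σ a (b + 1) = σ (b + 1) * descProd σ a b := by
  have h1 : b + 1 + 1 - a = (b + 1 - a) + 1 := by omega
  have h2 : a + (b + 1 - a) = b + 1 := by omega
  rw [descProd, h1, List.range'_1_concat, h2]
  simp [descProd]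

lemma dP_succ' {a b : ℕ} (h1 : 1 ≤ a) (h2 : a ≤ b) :
    descProd σ a b = σ b * descProd σ a (b - 1) := by
  have hb : b - 1 + 1 = b := by omega
  rw [← hb, dP_succ σ (by omega)]
  simp [hb]

lemma dP_split {a b c : ℕ} (h1 : a ≤ c + 1) (h2 : c ≤ b) :
    descProd σ a b = descProd σ (c + 1) b * descProd σ a c := by
  obtain ⟨n, rfl⟩ := Nat.exists_eq_add_of_le h2
  induction n with
  | zero => rw [dP_nil σ (show c + 0 < c + 1 by omega)]; simp
  | succ k ih =>
      have e : c + (k + 1) = (c + k) + 1 := by omega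
      rw [e, dP_succ σ (by omega), dP_succ σ (by omega), ih (by omega)]
      rw [mul_assoc]

end DescProd

section Braid

variable {M : Type*} [Group M] {r : ℕ} {σ : ℕ → M}
variable (hcomm : ∀ i j : ℕ, 1 ≤ i → i + 1 < j → j ≤ r → σ i * σ j = σ j * σ i)
variable (hbraid : ∀ i : ℕ, 1 ≤ i → i + 1 ≤ r →
    σ i * σ (i + 1) * σ i = σ (i + 1) * σ i * σ (i + 1))

include hcomm in
/-- A low generator commutes with a block of higher generators. -/
lemma comm_low {j a : ℕ} (hj : 1 ≤ j) (hja : j + 1 < a) :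
    ∀ b, b ≤ r → σ j * descProd σ a b = descProd σ a b * σ j := by
  intro b
  induction b with
  | zero =>
      intro _
      rw [dP_nil σ (show 0 < a by omega)]; simp
  | succ k ih =>
      intro hk
      by_cases h : a ≤ k + 1
      · rw [dP_succ σ h]
        have hc : σ j * σ (k + 1) = σ (k + 1) * σ j :=
          hcomm j (k + 1) hj (by omega) hk
        calc σ j * (σ (k + 1) * descProd σ a k)
            = σ (k + 1) * (σ j * descProd σ a k) := by
              rw [← mul_assoc, hc, mul_assoc]
          _ = σ (k + 1) * (descProd σ a k * σ j) := by rw [ih (by omega)]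
          _ = σ (k + 1) * descProd σ a k * σ j := by rw [mul_assoc]
      · rw [dP_nil σ (show k + 1 < a by omega)]; simp

include hcomm in
/-- A high generator commutes with a block of lower generators. -/
lemma comm_high {j a : ℕ} (ha : 1 ≤ a) :
    ∀ b, b + 1 < j → j ≤ r → σ j * descProd σ a b = descProd σ a b * σ j := by
  intro b
  induction b with
  | zero =>
      intro _ _
      rw [dP_nil σ (show 0 < a by omega)]; simp
  | succ k ih =>
      intro hkj hjr
      by_cases h : a ≤ k + 1
      · rw [dP_succ σ h]
        have hc : σ j * σ (k + 1) = σ (k + 1) * σ j :=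
          (hcomm (k + 1) j (by omega) (by omega) hjr).symm
        calc σ j * (σ (k + 1) * descProd σ a k)
            = σ (k + 1) * (σ j * descProd σ a k) := by
              rw [← mul_assoc, hc, mul_assoc]
          _ = σ (k + 1) * (descProd σ a k * σ j) := by
              rw [ih (by omega) hjr]
          _ = σ (k + 1) * descProd σ a k * σ j := by rw [mul_assoc]
      · rw [dP_nil σ (show k + 1 < a by omega)]; simp

include hcomm hbraid in
/-- The fundamental shift relation: `σ i · d(a,b) = d(a,b) · σ (i+1)`. -/
lemma shift {i a : ℕ} (ha : 1 ≤ a) (hai : a ≤ i) :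
    ∀ b, i < b → b ≤ r → σ i * descProd σ a b = descProd σ a b * σ (i + 1) := by
  intro b
  induction b with
  | zero => omega
  | succ k ih =>
      intro hik hkr
      rw [dP_succ σ (by omega)]
      by_cases h : i < k
      · have hc : σ i * σ (k + 1) = σ (k + 1) * σ i :=
          hcomm i (k + 1) (by omega) (by omega) hkr
        calc σ i * (σ (k + 1) * descProd σ a k)
            = σ (k + 1) * (σ i * descProd σ a k) := by
              rw [← mul_assoc, hc, mul_assoc]
          _ = σ (k + 1) * (descProd σ a k * σ (i + 1)) := by
              rw [ih h (by omega)]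
          _ = σ (k + 1) * descProd σ a k * σ (i + 1) := by rw [mul_assoc]
      · have hik' : i = k := by omega
        subst hik'
        have h2 : descProd σ a i = σ i * descProd σ a (i - 1) :=
          dP_succ' σ ha hai
        have hcm : σ (i + 1) * descProd σ a (i - 1)
            = descProd σ a (i - 1) * σ (i + 1) :=
          comm_high hcomm ha (i - 1) (by omega) hkr
        calc σ i * (σ (i + 1) * descProd σ a i)
            = σ i * (σ (i + 1) * (σ i * descProd σ a (i - 1))) := by rw [h2]
          _ = σ (i + 1) * (σ i * (σ (i + 1) * descProd σ a (i - 1))) := by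
              rw [braid_swap (hbraid i (by omega) hkr)]
          _ = σ (i + 1) * (σ i * (descProd σ a (i - 1) * σ (i + 1))) := by
              rw [hcm]
          _ = σ (i + 1) * ((σ i * descProd σ a (i - 1)) * σ (i + 1)) := by
              rw [mul_assoc]
          _ = σ (i + 1) * descProd σ a i * σ (i + 1) := by
              rw [← h2, mul_assoc]

include hcomm hbraid in
/-- Block shift: `d(c,e) · d(a,b) = d(a,b) · d(c+1,e+1)` when `[c,e] ⊆ [a,b-1]`. -/
lemma blockshift {a b : ℕ} (ha : 1 ≤ a) (hbr : b ≤ r) :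
    ∀ e c, a ≤ c → e < b →
      descProd σ c e * descProd σ a b = descProd σ a b * descProd σ (c + 1) (e + 1) := by
  intro e
  induction e using Nat.strong_induction_on with
  | _ e ih =>
    intro c hac heb
    by_cases hce : e < c
    · rw [dP_nil σ hce, dP_nil σ (show e + 1 < c + 1 by omega)]; simp
    · have hce' : c ≤ e := by omega
      have h1 : descProd σ c e = σ e * descProd σ c (e - 1) :=
        dP_succ' σ (by omega) hce'
      have he : e - 1 + 1 = e := by omega
      have h2 : descProd σ c (e - 1) * descProd σ a b
          = descProd σ a b * descProd σ (c + 1) e := by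
        have := ih (e - 1) (by omega) c hac (by omega)
        rwa [he] at this
      have h3 : σ e * descProd σ a b = descProd σ a b * σ (e + 1) :=
        shift hcomm hbraid ha (by omega) b heb hbr
      have h4 : descProd σ (c + 1) (e + 1)
          = σ (e + 1) * descProd σ (c + 1) e :=
        dP_succ σ (by omega)
      calc descProd σ c e * descProd σ a b
          = σ e * (descProd σ c (e - 1) * descProd σ a b) := by
            rw [h1, mul_assoc]
        _ = σ e * (descProd σ a b * descProd σ (c + 1) e) := by rw [h2]
        _ = (σ e * descProd σ a b) * descProd σ (c + 1) e := by
            rw [mul_assoc]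
        _ = (descProd σ a b * σ (e + 1)) * descProd σ (c + 1) e := by
            rw [h3]
        _ = descProd σ a b * (σ (e + 1) * descProd σ (c + 1) e) := by
            rw [mul_assoc]
        _ = descProd σ a b * descProd σ (c + 1) (e + 1) := by rw [← h4]

include hcomm hbraid in
/-- `σ (a+n) · (d(a,a+n-1) d(a,a+n)) = (d(a,a+n-1) d(a,a+n)) · σ a`. -/
lemma Qp (a : ℕ) (ha : 1 ≤ a) :
    ∀ n, a + n ≤ r →
      σ (a + n) * (descProd σ a (a + n - 1) * descProd σ a (a + n))
        = (descProd σ a (a + n - 1) * descProd σ a (a + n)) * σ a := by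
  intro n
  induction n with
  | zero =>
      intro _
      have e0 : a + 0 = a := by omega
      rw [e0, dP_nil σ (show a - 1 < a by omega), dP_singleton]
      simp
  | succ n ih =>
      intro hnr
      have e1 : a + (n + 1) - 1 = a + n := by omega
      have e2 : a + (n + 1) = (a + n) + 1 := by omega
      rw [e1, e2]
      set dm := descProd σ a (a + n - 1) with hdm
      set d0 := descProd σ a (a + n) with hd0
      have h0 : d0 = σ (a + n) * dm := dP_succ' σ ha (by omega)
      have h1 : descProd σ a (a + n + 1) = σ (a + n + 1) * d0 :=
        dP_succ σ (by omega)
      have hc : dm * σ (a + n + 1) = σ (a + n + 1) * dm :=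
        (comm_high hcomm ha (a + n - 1) (by omega) (by omega)).symm
      have hb : σ (a + n) * σ (a + n + 1) * σ (a + n)
          = σ (a + n + 1) * σ (a + n) * σ (a + n + 1) :=
        hbraid (a + n) (by omega) (by omega)
      have ihn : σ (a + n) * (dm * d0) = (dm * d0) * σ a := ih (by omega)
      have key : d0 * descProd σ a (a + n + 1)
          = σ (a + n) * (σ (a + n + 1) * (dm * d0)) := by
        calc d0 * descProd σ a (a + n + 1)
            = (σ (a + n) * dm) * (σ (a + n + 1) * d0) := by
              rw [h1, ← h0]
          _ = σ (a + n) * (dm * (σ (a + n + 1) * d0)) := by rw [mul_assoc]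
          _ = σ (a + n) * (σ (a + n + 1) * (dm * d0)) := by
              rw [swap_mul hc]
      calc σ (a + n + 1) * (d0 * descProd σ a (a + n + 1))
          = σ (a + n + 1) * (σ (a + n) * (σ (a + n + 1) * (dm * d0))) := by
            rw [key]
        _ = σ (a + n) * (σ (a + n + 1) * (σ (a + n) * (dm * d0))) := by
            rw [braid_swap hb.symm]
        _ = σ (a + n) * (σ (a + n + 1) * ((dm * d0) * σ a)) := by rw [ihn]
        _ = (d0 * descProd σ a (a + n + 1)) * σ a := by
            rw [key]; (try simp only [mul_assoc])

include hcomm hbraid in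
/-- `σ b · d(a,b)² = d(a,b)² · σ a`. -/
lemma Nlem {a b : ℕ} (ha : 1 ≤ a) (hab : a ≤ b) (hbr : b ≤ r) :
    σ b * (descProd σ a b) ^ 2 = (descProd σ a b) ^ 2 * σ a := by
  rcases eq_or_lt_of_le hab with h | h
  · subst h
    rw [dP_singleton, pow_two]
    simp [mul_assoc]
  · set d' := descProd σ a (b - 1) with hd'
    set d'' := descProd σ a (b - 2) with hd''
    have h1 : descProd σ a b = σ b * d' := dP_succ' σ ha hab
    have h2 : d' = σ (b - 1) * d'' := by
      have e : b - 1 - 1 = b - 2 := by omega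
      rw [hd', hd'', dP_succ' σ ha (show a ≤ b - 1 by omega), e]
    have h3 : d'' * σ b = σ b * d'' :=
      (comm_high hcomm ha (b - 2) (by omega) hbr).symm
    have hb2 : σ (b - 1) * σ b * σ (b - 1) = σ b * σ (b - 1) * σ b := by
      have := hbraid (b - 1) (by omega) (by omega)
      have e : b - 1 + 1 = b := by omega
      rwa [e] at this
    have hq : σ (b - 1) * (d'' * d') = (d'' * d') * σ a := by
      have := Qp hcomm hbraid a ha (b - 1 - a) (by omega)
      have e1 : a + (b - 1 - a) = b - 1 := by omega
      have e2 : b - 1 - 1 = b - 2 := by omega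
      rwa [e1, e2, ← hd', ← hd''] at this
    have key : (descProd σ a b) ^ 2 = σ b * (σ (b - 1) * (σ b * (d'' * d'))) := by
      calc (descProd σ a b) ^ 2 = (σ b * d') * (σ b * d') := by
            rw [pow_two, h1]
        _ = σ b * (d' * (σ b * d')) := by rw [mul_assoc]
        _ = σ b * ((σ (b - 1) * d'') * (σ b * d')) := by rw [← h2]
        _ = σ b * (σ (b - 1) * (d'' * (σ b * d'))) := by rw [mul_assoc]
        _ = σ b * (σ (b - 1) * (σ b * (d'' * d'))) := by rw [swap_mul h3]
    calc σ b * (descProd σ a b) ^ 2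
        = σ b * (σ b * (σ (b - 1) * (σ b * (d'' * d')))) := by rw [key]
      _ = σ b * (σ (b - 1) * (σ b * (σ (b - 1) * (d'' * d')))) := by
          rw [braid_swap hb2.symm]
      _ = σ b * (σ (b - 1) * (σ b * ((d'' * d') * σ a))) := by rw [hq]
      _ = (descProd σ a b) ^ 2 * σ a := by rw [key]; (try simp only [mul_assoc])

end Braid

section DlLemmas

variable {M : Type*} [Group M] (σ : ℕ → M)

lemma Dl_nil {a b : ℕ} (h : b < a) : DlP σ a b = 1 := by
  have h0 : b + 1 - a = 0 := by omega
  simp [DlP, h0]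

lemma Dl_succ {a b : ℕ} (h : a ≤ b + 1) :
    DlP σ a (b + 1) = DlP σ a b * descProd σ a (b + 1) := by
  have h1 : b + 1 + 1 - a = (b + 1 - a) + 1 := by omega
  have h2 : a + (b + 1 - a) = b + 1 := by omega
  rw [DlP, h1, List.range'_1_concat, h2]
  simp [DlP]

lemma Dl_succ' {a b : ℕ} (h1 : 1 ≤ a) (h2 : a ≤ b) :
    DlP σ a b = DlP σ a (b - 1) * descProd σ a b := by
  have hb : b - 1 + 1 = b := by omega
  rw [← hb, Dl_succ σ (by omega), hb]

lemma Dg_zero (r a : ℕ) : DgP σ r a 0 = 1 := by simp [DgP]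

lemma Dg_cons (r a n : ℕ) :
    DgP σ r a (n + 1) = descProd σ a r * DgP σ r (a + 1) n := by
  rw [DgP, List.range'_succ]
  simp [DgP]

lemma Dg_concat (r a n : ℕ) :
    DgP σ r a (n + 1) = DgP σ r a n * descProd σ (a + n) r := by
  rw [DgP, List.range'_1_concat]
  simp [DgP]

end DlLemmas

section Braid2

variable {M : Type*} [Group M] {r : ℕ} {σ : ℕ → M}
variable (hcomm : ∀ i j : ℕ, 1 ≤ i → i + 1 < j → j ≤ r → σ i * σ j = σ j * σ i)
variable (hbraid : ∀ i : ℕ, 1 ≤ i → i + 1 ≤ r →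
    σ i * σ (i + 1) * σ i = σ (i + 1) * σ i * σ (i + 1))

include hcomm hbraid in
lemma DlBS {a b : ℕ} (ha : 1 ≤ a) (hbr : b ≤ r) :
    ∀ e c, a ≤ c → e < b →
      DlP σ c e * descProd σ a b = descProd σ a b * DlP σ (c + 1) (e + 1) := by
  intro e
  induction e using Nat.strong_induction_on with
  | _ e ih =>
    intro c hac heb
    by_cases hce : e < c
    · rw [Dl_nil σ hce, Dl_nil σ (show e + 1 < c + 1 by omega)]; simp
    · have hce' : c ≤ e := by omega
      have he : e - 1 + 1 = e := by omega
      have h1 : DlP σ c e = DlP σ c (e - 1) * descProd σ c e :=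
        Dl_succ' σ (by omega) hce'
      have h2 : DlP σ c (e - 1) * descProd σ a b
          = descProd σ a b * DlP σ (c + 1) e := by
        have := ih (e - 1) (by omega) c hac (by omega)
        rwa [he] at this
      have h3 : descProd σ c e * descProd σ a b
          = descProd σ a b * descProd σ (c + 1) (e + 1) :=
        blockshift hcomm hbraid ha hbr e c hac heb
      have h4 : DlP σ (c + 1) (e + 1)
          = DlP σ (c + 1) e * descProd σ (c + 1) (e + 1) :=
        Dl_succ σ (by omega)
      calc DlP σ c e * descProd σ a b
          = DlP σ c (e - 1) * (descProd σ c e * descProd σ a b) := by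
            rw [h1, mul_assoc]
        _ = DlP σ c (e - 1) * (descProd σ a b * descProd σ (c + 1) (e + 1)) := by
            rw [h3]
        _ = (DlP σ c (e - 1) * descProd σ a b) * descProd σ (c + 1) (e + 1) := by
            rw [mul_assoc]
        _ = (descProd σ a b * DlP σ (c + 1) e) * descProd σ (c + 1) (e + 1) := by
            rw [h2]
        _ = descProd σ a b * DlP σ (c + 1) (e + 1) := by
            rw [mul_assoc, ← h4]

include hcomm hbraid in
lemma Dl_cons {a b : ℕ} (ha : 1 ≤ a) (hab : a ≤ b) (hbr : b ≤ r) :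
    DlP σ a b = descProd σ a b * DlP σ (a + 1) b := by
  have he : b - 1 + 1 = b := by omega
  calc DlP σ a b = DlP σ a (b - 1) * descProd σ a b := Dl_succ' σ ha hab
    _ = descProd σ a b * DlP σ (a + 1) (b - 1 + 1) := by
        exact DlBS hcomm hbraid ha hbr (b - 1) a le_rfl (by omega)
    _ = descProd σ a b * DlP σ (a + 1) b := by rw [he]

include hcomm hbraid in
lemma DgDl : ∀ n a, 1 ≤ a → a + n = r + 1 → DgP σ r a n = DlP σ a r := by
  intro n
  induction n with
  | zero =>
      intro a ha har
      rw [Dg_zero, Dl_nil σ (show r < a by omega)]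
  | succ k ih =>
      intro a ha har
      rw [Dg_cons, ih (a + 1) (by omega) (by omega),
        ← Dl_cons hcomm hbraid ha (by omega) le_rfl]

include hcomm hbraid in
lemma Rj : ∀ m, m ≤ r →
    (descProd σ 1 r) ^ (m + 1) = DgP σ r 1 (m + 1) * DlP σ 1 m := by
  intro m
  induction m with
  | zero =>
      intro _
      rw [pow_one, Dl_nil σ (show 0 < 1 by omega), Dg_concat]
      simp [Dg_zero]
  | succ m ih =>
      intro hm
      have hsp : descProd σ 1 r
          = descProd σ (m + 2) r * descProd σ 1 (m + 1) :=
        dP_split σ (by omega) (by omega)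
      have hbs : DlP σ 1 m * descProd σ 1 r
          = descProd σ 1 r * DlP σ 2 (m + 1) :=
        DlBS hcomm hbraid le_rfl le_rfl m 1 le_rfl (by omega)
      have hcons : DlP σ 1 (m + 1)
          = descProd σ 1 (m + 1) * DlP σ 2 (m + 1) :=
        Dl_cons hcomm hbraid le_rfl (by omega) (by omega)
      have hcat : DgP σ r 1 (m + 2) = DgP σ r 1 (m + 1) * descProd σ (m + 2) r := by
        have := Dg_concat σ r 1 (m + 1)
        have e : 1 + (m + 1) = m + 2 := by omega
        rwa [e] at this
      calc (descProd σ 1 r) ^ (m + 1 + 1)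
          = (descProd σ 1 r) ^ (m + 1) * descProd σ 1 r := pow_succ _ _
        _ = (DgP σ r 1 (m + 1) * DlP σ 1 m) * descProd σ 1 r := by
            rw [ih (by omega)]
        _ = DgP σ r 1 (m + 1) * (DlP σ 1 m * descProd σ 1 r) := by
            rw [mul_assoc]
        _ = DgP σ r 1 (m + 1) * (descProd σ 1 r * DlP σ 2 (m + 1)) := by
            rw [hbs]
        _ = DgP σ r 1 (m + 1) * ((descProd σ (m + 2) r * descProd σ 1 (m + 1))
              * DlP σ 2 (m + 1)) := by rw [← hsp]
        _ = DgP σ r 1 (m + 1) * (descProd σ (m + 2) r * (descProd σ 1 (m + 1)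
              * DlP σ 2 (m + 1))) := by rw [mul_assoc]
        _ = DgP σ r 1 (m + 1) * (descProd σ (m + 2) r * DlP σ 1 (m + 1)) := by
            rw [← hcons]
        _ = (DgP σ r 1 (m + 1) * descProd σ (m + 2) r) * DlP σ 1 (m + 1) := by
            rw [mul_assoc]
        _ = DgP σ r 1 (m + 2) * DlP σ 1 (m + 1) := by rw [← hcat]

include hcomm hbraid in
/-- `δ^(r+1) = Δ²`. -/
lemma M1 : (descProd σ 1 r) ^ (r + 1) = DlP σ 1 r * DlP σ 1 r := by
  have h := Rj hcomm hbraid r le_rfl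
  have hcat : DgP σ r 1 (r + 1) = DgP σ r 1 r * descProd σ (1 + r) r :=
    Dg_concat σ r 1 r
  rw [dP_nil σ (show r < 1 + r by omega), mul_one] at hcat
  rw [h, hcat, DgDl hcomm hbraid r 1 le_rfl (by omega)]

end Braid2

section Braid3

variable {M : Type*} [Group M] {r : ℕ} {σ : ℕ → M}
variable (hcomm : ∀ i j : ℕ, 1 ≤ i → i + 1 < j → j ≤ r → σ i * σ j = σ j * σ i)
variable (hbraid : ∀ i : ℕ, 1 ≤ i → i + 1 ≤ r →
    σ i * σ (i + 1) * σ i = σ (i + 1) * σ i * σ (i + 1))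

include hcomm hbraid in
lemma shift_pow : ∀ k i, 1 ≤ i → i + k ≤ r →
    σ i * (descProd σ 1 r) ^ k = (descProd σ 1 r) ^ k * σ (i + k) := by
  intro k
  induction k with
  | zero => intro i _ _; simp
  | succ k ih =>
      intro i hi hik
      have h1 : σ i * (descProd σ 1 r) ^ k
          = (descProd σ 1 r) ^ k * σ (i + k) := ih i hi (by omega)
      have h2 : σ (i + k) * descProd σ 1 r = descProd σ 1 r * σ (i + k + 1) :=
        shift hcomm hbraid le_rfl (by omega) r (by omega) le_rfl
      calc σ i * (descProd σ 1 r) ^ (k + 1)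
          = σ i * ((descProd σ 1 r) ^ k * descProd σ 1 r) := by rw [pow_succ]
        _ = (σ i * (descProd σ 1 r) ^ k) * descProd σ 1 r := by rw [mul_assoc]
        _ = ((descProd σ 1 r) ^ k * σ (i + k)) * descProd σ 1 r := by rw [h1]
        _ = (descProd σ 1 r) ^ k * (σ (i + k) * descProd σ 1 r) := by
            rw [mul_assoc]
        _ = (descProd σ 1 r) ^ k * (descProd σ 1 r * σ (i + k + 1)) := by
            rw [h2]
        _ = (descProd σ 1 r) ^ (k + 1) * σ (i + (k + 1)) := by
            rw [← mul_assoc, ← pow_succ]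
            rfl

include hcomm hbraid in
lemma shift_pow_inv (k i : ℕ) (hi : 1 ≤ i) (hik : i + k ≤ r) :
    (σ i)⁻¹ * (descProd σ 1 r) ^ k = (descProd σ 1 r) ^ k * (σ (i + k))⁻¹ :=
  semi_inv (shift_pow hcomm hbraid k i hi hik)

include hcomm hbraid in
/-- Key lemma: `v_m ⋯ v_1 · σ1^(2(m+1)) = d(1,m+1)²`. -/
lemma M3 : ∀ m, m + 1 ≤ r →
    Wp σ m * σ 1 ^ (2 * (m + 1)) = (descProd σ 1 (m + 1)) ^ 2 := by
  intro m
  induction m with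
  | zero =>
      intro _
      have : descProd σ 1 1 = σ 1 := dP_singleton σ 1
      simp [Wp, this]
  | succ m ih =>
      intro hm
      have ihm := ih (by omega)
      set δ' := descProd σ 1 (m + 1) with hδ'
      have hN : σ (m + 1) * δ' ^ 2 = δ' ^ 2 * σ 1 :=
        Nlem hcomm hbraid le_rfl (by omega) (by omega)
      have hNi : (σ (m + 1))⁻¹ * δ' ^ 2 = δ' ^ 2 * (σ 1)⁻¹ := semi_inv hN
      have hsucc : descProd σ 1 (m + 2) = σ (m + 2) * δ' :=
        dP_succ σ (by omega)
      have hδ'2 : δ' = σ (m + 1) * descProd σ 1 m := dP_succ σ (by omega)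
      have hcm : descProd σ 1 m * σ (m + 2) = σ (m + 2) * descProd σ 1 m :=
        (comm_high hcomm le_rfl m (by omega) (by omega)).symm
      have hb : σ (m + 2) * σ (m + 1) * σ (m + 2)
          = σ (m + 1) * σ (m + 2) * σ (m + 1) :=
        (hbraid (m + 1) (by omega) hm).symm
      have hpow : σ 1 ^ (2 * (m + 2)) = σ 1 ^ (2 * (m + 1)) * (σ 1 * σ 1) := by
        have e : 2 * (m + 2) = 2 * (m + 1) + 2 := by omega
        rw [e, pow_add, pow_two]
      have lhs_eq : Wp σ (m + 1) * σ 1 ^ (2 * (m + 2))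
          = σ (m + 1) * (σ (m + 2) * (δ' ^ 2)) := by
        calc Wp σ (m + 1) * σ 1 ^ (2 * (m + 2))
            = (braidV σ (m + 1) * Wp σ m)
                * (σ 1 ^ (2 * (m + 1)) * (σ 1 * σ 1)) := by rw [Wp, hpow]
          _ = braidV σ (m + 1) * ((Wp σ m * σ 1 ^ (2 * (m + 1))) * (σ 1 * σ 1)) := by
              simp only [mul_assoc]
          _ = braidV σ (m + 1) * (δ' ^ 2 * (σ 1 * σ 1)) := by rw [ihm]
          _ = σ (m + 1) * (σ (m + 2) * ((σ (m + 1))⁻¹ * ((σ (m + 1))⁻¹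
                * (δ' ^ 2 * (σ 1 * σ 1))))) := by
              rw [braidV]; simp only [mul_assoc]
          _ = σ (m + 1) * (σ (m + 2) * ((σ (m + 1))⁻¹ * (δ' ^ 2
                * ((σ 1)⁻¹ * (σ 1 * σ 1))))) := by rw [swap_mul hNi]
          _ = σ (m + 1) * (σ (m + 2) * ((σ (m + 1))⁻¹ * (δ' ^ 2 * σ 1))) := by
              rw [inv_mul_cancel_left]
          _ = σ (m + 1) * (σ (m + 2) * (δ' ^ 2 * ((σ 1)⁻¹ * σ 1))) := by
              rw [swap_mul hNi]
          _ = σ (m + 1) * (σ (m + 2) * (δ' ^ 2)) := by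
              rw [inv_mul_cancel, mul_one]
      have rhs_eq : (descProd σ 1 (m + 2)) ^ 2
          = σ (m + 1) * (σ (m + 2) * (δ' ^ 2)) := by
        calc (descProd σ 1 (m + 2)) ^ 2
            = σ (m + 2) * (δ' * (σ (m + 2) * δ')) := by
              rw [pow_two, hsucc]; simp only [mul_assoc]
          _ = σ (m + 2) * ((σ (m + 1) * descProd σ 1 m) * (σ (m + 2) * δ')) := by
              rw [← hδ'2]
          _ = σ (m + 2) * (σ (m + 1) * (descProd σ 1 m * (σ (m + 2) * δ'))) := by
              rw [mul_assoc]
          _ = σ (m + 2) * (σ (m + 1) * (σ (m + 2) * (descProd σ 1 m * δ'))) := by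
              rw [swap_mul hcm]
          _ = σ (m + 1) * (σ (m + 2) * (σ (m + 1) * (descProd σ 1 m * δ'))) := by
              rw [braid_swap hb]
          _ = σ (m + 1) * (σ (m + 2) * ((σ (m + 1) * descProd σ 1 m) * δ')) := by
              rw [mul_assoc]
          _ = σ (m + 1) * (σ (m + 2) * (δ' ^ 2)) := by
              rw [← hδ'2, ← pow_two]
      rw [lhs_eq, rhs_eq]

include hcomm hbraid in
/-- `(δ v₁)^k = δ^k · v_k ⋯ v_1`. -/
lemma Ylem : ∀ k, k + 1 ≤ r →
    (descProd σ 1 r * braidV σ 1) ^ k = (descProd σ 1 r) ^ k * Wp σ k := by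
  intro k
  induction k with
  | zero => intro _; simp [Wp]
  | succ k ih =>
      intro hk
      have ihk := ih (by omega)
      set δ := descProd σ 1 r with hδ
      have s1 : σ 1 * δ ^ k = δ ^ k * σ (1 + k) :=
        shift_pow hcomm hbraid k 1 le_rfl (by omega)
      have s2 : σ 2 * δ ^ k = δ ^ k * σ (2 + k) :=
        shift_pow hcomm hbraid k 2 (by omega) (by omega)
      have s1i : (σ 1)⁻¹ * δ ^ k = δ ^ k * (σ (1 + k))⁻¹ :=
        shift_pow_inv hcomm hbraid k 1 le_rfl (by omega)
      have e1 : 1 + k = k + 1 := by omega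
      have e2 : 2 + k = k + 2 := by omega
      rw [e1] at s1 s1i
      rw [e2] at s2
      calc (δ * braidV σ 1) ^ (k + 1)
          = (δ * braidV σ 1) * (δ * braidV σ 1) ^ k := by rw [pow_succ']
        _ = (δ * braidV σ 1) * (δ ^ k * Wp σ k) := by rw [ihk]
        _ = δ * (σ 1 * (σ 2 * ((σ 1)⁻¹ * ((σ 1)⁻¹ * (δ ^ k * Wp σ k))))) := by
            rw [braidV]; simp only [mul_assoc]
        _ = δ * (σ 1 * (σ 2 * ((σ 1)⁻¹ * (δ ^ k * ((σ (k + 1))⁻¹ * Wp σ k))))) := by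
            rw [swap_mul s1i]
        _ = δ * (σ 1 * (σ 2 * (δ ^ k * ((σ (k + 1))⁻¹ * ((σ (k + 1))⁻¹ * Wp σ k))))) := by
            rw [swap_mul s1i]
        _ = δ * (σ 1 * (δ ^ k * (σ (k + 2) * ((σ (k + 1))⁻¹ * ((σ (k + 1))⁻¹ * Wp σ k))))) := by
            rw [swap_mul s2]
        _ = δ * (δ ^ k * (σ (k + 1) * (σ (k + 2) * ((σ (k + 1))⁻¹ * ((σ (k + 1))⁻¹ * Wp σ k))))) := by
            rw [swap_mul s1]
        _ = δ ^ (k + 1) * (σ (k + 1) * (σ (k + 2) * ((σ (k + 1))⁻¹ * ((σ (k + 1))⁻¹ * Wp σ k)))) := by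
            rw [← mul_assoc, ← pow_succ']
        _ = δ ^ (k + 1) * Wp σ (k + 1) := by
            rw [Wp, braidV]; simp only [mul_assoc]

include hcomm hbraid in
lemma central1 (hr : 2 ≤ r) :
    σ 1 * (descProd σ 1 r) ^ (r + 1) = (descProd σ 1 r) ^ (r + 1) * σ 1 := by
  set δ := descProd σ 1 r with hδ
  have e : r + 1 = (r - 1) + 2 := by omega
  have s1 : σ 1 * δ ^ (r - 1) = δ ^ (r - 1) * σ (1 + (r - 1)) :=
    shift_pow hcomm hbraid (r - 1) 1 le_rfl (by omega)
  have e2 : 1 + (r - 1) = r := by omega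
  rw [e2] at s1
  have hN : σ r * δ ^ 2 = δ ^ 2 * σ 1 :=
    Nlem hcomm hbraid le_rfl (by omega) le_rfl
  calc σ 1 * δ ^ (r + 1) = σ 1 * (δ ^ (r - 1) * δ ^ 2) := by rw [e, pow_add]
    _ = (σ 1 * δ ^ (r - 1)) * δ ^ 2 := by rw [mul_assoc]
    _ = (δ ^ (r - 1) * σ r) * δ ^ 2 := by rw [s1]
    _ = δ ^ (r - 1) * (σ r * δ ^ 2) := by rw [mul_assoc]
    _ = δ ^ (r - 1) * (δ ^ 2 * σ 1) := by rw [hN]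
    _ = δ ^ (r + 1) * σ 1 := by rw [← mul_assoc, ← pow_add, ← e]

end Braid3

end Stmt8Aux

/-- In the braid group `B_{r+1}` (i.e. in any group with elements `σ 1, …, σ r`
satisfying the braid relations), with `A = σ r ⋯ σ 3`,
`t i = σ 1 ^ (-2i) * σ 2 * σ 1 ^ (2i)` and
`Δ = σ 1 * (σ 2 σ 1) * ⋯ * (σ r ⋯ σ 1)` the half twist, one has
`(A * t 1 * t 0) ^ (r - 1) = σ 1 ^ (-2r) * Δ ^ 2`. -/
theorem stmt8 {M : Type*} [Group M] (r : ℕ) (hr : 2 ≤ r) (σ : ℕ → M)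
    (hcomm : ∀ i j : ℕ, 1 ≤ i → i + 1 < j → j ≤ r → σ i * σ j = σ j * σ i)
    (hbraid : ∀ i : ℕ, 1 ≤ i → i + 1 ≤ r →
      σ i * σ (i + 1) * σ i = σ (i + 1) * σ i * σ (i + 1))
    (A Δ : M) (hA : A = descProd σ 3 r)
    (hΔ : Δ = ((List.range r).map (fun k => descProd σ 1 (k + 1))).prod)
    (t : ℤ → M) (ht : ∀ i : ℤ, t i = σ 1 ^ (-(2 * i)) * σ 2 * σ 1 ^ (2 * i)) :
    (A * t 1 * t 0) ^ (r - 1) = σ 1 ^ (-(2 * (r : ℤ))) * Δ ^ 2 := by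
  open Stmt8Aux in
  set δ := descProd σ 1 r with hδdef
  -- identification of Δ with `DlP σ 1 r`
  have hΔDl : Δ = DlP σ 1 r := by
    rw [hΔ, DlP]
    have h0 : r + 1 - 1 = r := by omega
    rw [h0, List.range'_eq_map_range, List.map_map]
    congr 1
    apply List.map_congr_left
    intro k _
    simp only [Function.comp_apply]
    rw [Nat.add_comm]
  -- the generators `t 0`, `t 1`
  have ht0 : t 0 = σ 2 := by rw [ht 0]; norm_num
  have ht1 : t 1 = (σ 1)⁻¹ * ((σ 1)⁻¹ * (σ 2 * (σ 1 * σ 1))) := by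
    rw [ht 1]
    have e1 : (-(2 * 1) : ℤ) = -2 := by norm_num
    have e2 : ((2 * 1) : ℤ) = 2 := by norm_num
    have e3 : (σ 1 : M) ^ (2 : ℤ) = σ 1 * σ 1 := by
      rw [show (2:ℤ) = ((2:ℕ):ℤ) by norm_num, zpow_natCast, pow_two]
    rw [e1, e2, zpow_neg, e3]
    group
  -- `σ 1` commutes with `A = d(3,r)`
  have hcA : σ 1 * descProd σ 3 r = descProd σ 3 r * σ 1 :=
    comm_low hcomm le_rfl (by omega) r le_rfl
  have hcAi : (σ 1)⁻¹ * descProd σ 3 r = descProd σ 3 r * (σ 1)⁻¹ :=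
    semi_inv hcA
  -- `δ = d(3,r) · σ 2 · σ 1`
  have hs1 : descProd σ 1 r = descProd σ 2 r * σ 1 := by
    have := dP_split σ (show (1:ℕ) ≤ 1 + 1 by omega) (show (1:ℕ) ≤ r by omega)
    rwa [dP_singleton] at this
  have hs2 : descProd σ 2 r = descProd σ 3 r * σ 2 := by
    have := dP_split σ (show (2:ℕ) ≤ 2 + 1 by omega) (show (2:ℕ) ≤ r by omega)
    rwa [dP_singleton] at this
  have hδform : δ = descProd σ 3 r * (σ 2 * σ 1) := by
    rw [hδdef, hs1, hs2, mul_assoc]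
  -- closed form of `X = A t₁ t₀`
  have key : descProd σ 3 r * ((σ 1)⁻¹ * ((σ 1)⁻¹ * (σ 2 * (σ 1 * σ 1)))) * σ 2
      = (σ 1)⁻¹ * ((σ 1)⁻¹ * (δ * (σ 1 * σ 2))) := by
    calc descProd σ 3 r * ((σ 1)⁻¹ * ((σ 1)⁻¹ * (σ 2 * (σ 1 * σ 1)))) * σ 2
        = descProd σ 3 r * ((σ 1)⁻¹ * ((σ 1)⁻¹ * (σ 2 * (σ 1 * (σ 1 * σ 2))))) := by
          simp only [mul_assoc]
      _ = (σ 1)⁻¹ * (descProd σ 3 r * ((σ 1)⁻¹ * (σ 2 * (σ 1 * (σ 1 * σ 2))))) := by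
          rw [swap_mul hcAi.symm]
      _ = (σ 1)⁻¹ * ((σ 1)⁻¹ * (descProd σ 3 r * (σ 2 * (σ 1 * (σ 1 * σ 2))))) := by
          rw [swap_mul hcAi.symm]
      _ = (σ 1)⁻¹ * ((σ 1)⁻¹ * ((descProd σ 3 r * (σ 2 * σ 1)) * (σ 1 * σ 2))) := by
          simp only [mul_assoc]
      _ = (σ 1)⁻¹ * ((σ 1)⁻¹ * (δ * (σ 1 * σ 2))) := by rw [← hδform]
  have hXc : A * t 1 * t 0
      = (σ 1 * σ 1)⁻¹ * (δ * braidV σ 1) * ((σ 1 * σ 1)⁻¹)⁻¹ := by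
    rw [hA, ht1, ht0, key, braidV, inv_inv]
    group
  -- powers
  have hpow : (A * t 1 * t 0) ^ (r - 1)
      = (σ 1 * σ 1)⁻¹ * (δ * braidV σ 1) ^ (r - 1) * ((σ 1 * σ 1)⁻¹)⁻¹ := by
    rw [hXc, conj_pow]
  have hY : (δ * braidV σ 1) ^ (r - 1) = δ ^ (r - 1) * Wp σ (r - 1) :=
    Ylem hcomm hbraid (r - 1) (by omega)
  have hM3 : Wp σ (r - 1) * σ 1 ^ (2 * r) = δ ^ 2 := by
    have h := M3 hcomm hbraid (r - 1) (by omega)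
    have e : r - 1 + 1 = r := by omega
    rwa [e] at h
  have hW : Wp σ (r - 1) = δ ^ 2 * (σ 1 ^ (2 * r))⁻¹ := by
    rw [← hM3, mul_inv_cancel_right]
  have hYfull : (δ * braidV σ 1) ^ (r - 1) = δ ^ (r + 1) * (σ 1 ^ (2 * r))⁻¹ := by
    have e : r - 1 + 2 = r + 1 := by omega
    rw [hY, hW, ← mul_assoc, ← pow_add, e]
  have hM1 : δ ^ (r + 1) = Δ ^ 2 := by
    rw [hδdef, M1 hcomm hbraid, ← hΔDl, pow_two]
  have hcent : σ 1 * Δ ^ 2 = Δ ^ 2 * σ 1 := by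
    rw [← hM1, hδdef]
    exact central1 hcomm hbraid hr
  have hC : Commute (σ 1) (Δ ^ 2) := hcent
  have hD1 : (σ 1 * σ 1)⁻¹ * Δ ^ 2 = Δ ^ 2 * (σ 1 * σ 1)⁻¹ :=
    (((hC.mul_left hC).inv_left)).eq
  have hD2 : Δ ^ 2 * (σ 1 ^ (2 * r))⁻¹ = (σ 1 ^ (2 * r))⁻¹ * Δ ^ 2 :=
    ((hC.symm.pow_right (2 * r)).inv_right).eq
  have hcc : (σ 1 * σ 1) * (σ 1 ^ (2 * r))⁻¹ = (σ 1 ^ (2 * r))⁻¹ * (σ 1 * σ 1) :=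
    ((((Commute.refl (σ 1)).mul_left (Commute.refl (σ 1))).pow_right
      (2 * r)).inv_right).eq
  have hzc : σ 1 ^ (-(2 * (r : ℤ))) = (σ 1 ^ (2 * r))⁻¹ := by
    have e : ((2 * r : ℕ) : ℤ) = 2 * (r : ℤ) := by push_cast; ring
    rw [zpow_neg, ← zpow_natCast, e]
  calc (A * t 1 * t 0) ^ (r - 1)
      = (σ 1 * σ 1)⁻¹ * (δ ^ (r + 1) * (σ 1 ^ (2 * r))⁻¹) * ((σ 1 * σ 1)⁻¹)⁻¹ := by
        rw [hpow, hYfull]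
    _ = (σ 1 * σ 1)⁻¹ * (Δ ^ 2 * ((σ 1 ^ (2 * r))⁻¹ * (σ 1 * σ 1))) := by
        rw [hM1, inv_inv]; simp only [mul_assoc]
    _ = Δ ^ 2 * ((σ 1 * σ 1)⁻¹ * ((σ 1 ^ (2 * r))⁻¹ * (σ 1 * σ 1))) := by
        rw [swap_mul hD1]
    _ = Δ ^ 2 * (σ 1 ^ (2 * r))⁻¹ := by
        congr 1
        rw [← mul_assoc]
        exact conj_comm hcc
    _ = (σ 1 ^ (2 * r))⁻¹ * Δ ^ 2 := hD2
    _ = σ 1 ^ (-(2 * (r : ℤ))) * Δ ^ 2 := by rw [hzc]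
end

section
/- In the braid group B_{r+1}, set λ = σ_1^{2e} · (A t_e)(A t_{e-1}) ⋯ (A t_1), where A = σ_r ⋯ σ_3 and t_i = σ_1^{-2i} σ_2 σ_1^{2i}. Then λ = ε^e, where ε = σ_r ⋯ σ_2 σ_1². Consequently λ^{r/gcd(e,r)} = (Δ²)^{e/gcd(e,r)}, using that ε^r = Δ². -/
theorem SemiconjBy.list_prod_map {M ι : Type*} [Monoid M] {d : M} {f g : ι → M} :
    ∀ {l : List ι}, (∀ j ∈ l, SemiconjBy d (f j) (g j)) →
      SemiconjBy d (l.map f).prod (l.map g).prod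
  | [], _ => by simp
  | j :: _, h => by
    simpa only [List.map_cons, List.prod_cons] using
      (h j List.mem_cons_self).mul_right (list_prod_map fun k hk => h k (List.mem_cons_of_mem _ hk))

section descProd

variable {M : Type*} [Monoid M] (σ : ℕ → M)

lemma descProd_of_lt {a b : ℕ} (h : b < a) : descProd σ a b = 1 := by
  simp [descProd, Nat.sub_eq_zero_of_le h]

lemma descProd_self (a : ℕ) : descProd σ a a = σ a := by
  simp [descProd]

lemma descProd_succ {a b : ℕ} (h : a ≤ b + 1) :
    descProd σ a (b + 1) = σ (b + 1) * descProd σ a b := by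
  rw [descProd, descProd, show b + 1 + 1 - a = b + 1 - a + 1 by omega, List.range'_concat,
    show a + 1 * (b + 1 - a) = b + 1 by omega]
  simp

lemma descProd_split {a c b : ℕ} (hac : a ≤ c + 1) (hcb : c ≤ b) :
    descProd σ a b = descProd σ (c + 1) b * descProd σ a c := by
  induction b, hcb using Nat.le_induction with
  | base => rw [descProd_of_lt σ (Nat.lt_succ_self c), one_mul]
  | succ b hcb ih => rw [descProd_succ σ (by omega), ih, descProd_succ σ (by omega), mul_assoc]

lemma descProd_eq_descProd_succ_mul {a b : ℕ} (h : a ≤ b) :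
    descProd σ a b = descProd σ (a + 1) b * σ a := by
  rw [descProd_split σ (c := a) (Nat.le_succ a) h, descProd_self]

lemma descProd_succ_succ (a b : ℕ) :
    descProd σ (a + 1) (b + 1) = descProd (fun i => σ (i + 1)) a b := by
  rw [descProd, descProd, Nat.add_sub_add_right, List.range'_succ_left, ← List.map_reverse,
    List.map_map]
  rfl

lemma commute_descProd {x : M} {a b : ℕ} (h : ∀ k, a ≤ k → k ≤ b → Commute x (σ k)) :
    Commute x (descProd σ a b) :=
  Commute.list_prod_right _ _ fun y hy => by
    obtain ⟨k, hk, rfl⟩ := List.mem_map.mp hy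
    rw [List.mem_reverse, List.mem_range'_1] at hk
    exact h k hk.1 (by omega)

end descProd

/-- The Garside element `Δ` of the braid group on the generators `σ a, …, σ (a + n - 1)`. -/
def garsideElement {M : Type*} [Monoid M] (σ : ℕ → M) (a n : ℕ) : M :=
  ((List.range n).map fun j => descProd σ a (j + a)).prod

structure BraidRelations {M : Type*} [Monoid M] (σ : ℕ → M) (r : ℕ) : Prop where
  comm : ∀ i j : ℕ, 1 ≤ i → i + 1 < j → j ≤ r → σ i * σ j = σ j * σ i
  braid : ∀ i : ℕ, 1 ≤ i → i + 1 ≤ r → σ i * σ (i + 1) * σ i = σ (i + 1) * σ i * σ (i + 1)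

namespace BraidRelations

variable {M : Type*} [Monoid M] {σ : ℕ → M} {r : ℕ} (hσ : BraidRelations σ r)
include hσ

lemma commute_descProd_descProd {a b c d : ℕ} (ha : 1 ≤ a) (hbc : b + 1 < c) (hd : d ≤ r) :
    Commute (descProd σ a b) (descProd σ c d) :=
  commute_descProd σ fun k hck hkd => (commute_descProd σ fun i hai hib =>
    (hσ.comm i k (by omega) (by omega) (by omega) : Commute (σ i) (σ k)).symm).symm

lemma semiconjBy_descProd {a i m : ℕ} (ha : 1 ≤ a) (hai : a ≤ i) (him : i < m) (hm : m ≤ r) :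
    SemiconjBy (descProd σ a m) (σ (i + 1)) (σ i) := by
  obtain ⟨i, rfl⟩ : ∃ j, i = j + 1 := ⟨i - 1, by omega⟩
  have hsplit : descProd σ a m
      = descProd σ (i + 3) m * (σ (i + 2) * (σ (i + 1) * descProd σ a i)) := by
    rw [descProd_split σ (by omega : a ≤ i + 2 + 1) (by omega : i + 2 ≤ m),
      descProd_succ σ (by omega : a ≤ i + 1 + 1), descProd_succ σ (by omega : a ≤ i + 1)]
  have hlow : Commute (σ (i + 2)) (descProd σ a i) :=
    commute_descProd σ fun k hak hki => (hσ.comm k (i + 2) (by omega) (by omega) (by omega)).symm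
  have hhigh : Commute (σ (i + 1)) (descProd σ (i + 3) m) :=
    commute_descProd σ fun k hk hkm => hσ.comm (i + 1) k (by omega) (by omega) (by omega)
  unfold SemiconjBy
  rw [hsplit]
  calc descProd σ (i + 3) m * (σ (i + 2) * (σ (i + 1) * descProd σ a i)) * σ (i + 2)
      = descProd σ (i + 3) m * (σ (i + 2) * σ (i + 1) * σ (i + 2)) * descProd σ a i := by
        simp only [mul_assoc, hlow.symm.eq]
    _ = descProd σ (i + 3) m * (σ (i + 1) * σ (i + 2) * σ (i + 1)) * descProd σ a i := by
        rw [hσ.braid (i + 1) (by omega) (by omega)]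
    _ = σ (i + 1) * (descProd σ (i + 3) m * (σ (i + 2) * (σ (i + 1) * descProd σ a i))) := by
        simp only [← mul_assoc, hhigh.eq]

lemma semiconjBy_descProd_descProd {a b c m : ℕ} (ha : 1 ≤ a) (hac : a ≤ c) (hbm : b < m)
    (hm : m ≤ r) :
    SemiconjBy (descProd σ a m) (descProd σ (c + 1) (b + 1)) (descProd σ c b) := by
  rw [descProd_succ_succ]
  refine SemiconjBy.list_prod_map fun j hj => ?_
  rw [List.mem_reverse, List.mem_range'_1] at hj
  exact hσ.semiconjBy_descProd ha (by omega) (by omega) hm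

lemma garsideElement_eq_prod_descProd {a n : ℕ} (ha : 1 ≤ a) (han : a + n = r + 1) :
    garsideElement σ a n = ((List.range n).map fun j => descProd σ (a + j) r).prod := by
  induction n generalizing a with
  | zero => rfl
  | succ n ih =>
    have hmove : SemiconjBy (descProd σ a r) (garsideElement σ (a + 1) n)
        (garsideElement σ a n) :=
      SemiconjBy.list_prod_map fun j hj =>
        hσ.semiconjBy_descProd_descProd (b := j + a) ha le_rfl (by simp at hj; omega) le_rfl
    rw [garsideElement, List.prod_range_succ, ← garsideElement, show n + a = r by omega,
      ← hmove.eq, ih (by omega) (by omega),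
      List.prod_range_succ']
    simp only [add_zero, Nat.succ_eq_add_one, add_assoc, add_comm 1]

lemma descProd_pow_succ {k : ℕ} (hk : k ≤ r) :
    descProd σ 1 r ^ (k + 1)
      = ((List.range (k + 1)).map fun j => descProd σ (1 + j) r).prod
        * garsideElement σ 1 k := by
  induction k with
  | zero => simp [garsideElement]
  | succ k ih =>
    have hcomm : Commute (garsideElement σ 1 k) (descProd σ (k + 2) r) :=
      Commute.list_prod_left _ _ fun x hx => by
        obtain ⟨j, hj, rfl⟩ := List.mem_map.mp hx
        exact hσ.commute_descProd_descProd le_rfl (by simp at hj; omega) le_rfl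
    rw [pow_succ, ih (by omega), descProd_split σ (by omega : 1 ≤ k + 1 + 1) hk, mul_assoc,
      ← mul_assoc _ (descProd σ (k + 2) r), hcomm.eq,
      List.prod_range_succ (fun j => descProd σ (1 + j) r) (k + 1),
      garsideElement, garsideElement, List.prod_range_succ (fun j => descProd σ 1 (j + 1)) k,
      add_comm 1 (k + 1)]
    simp only [mul_assoc]

lemma descProd_mul_pow {k : ℕ} (hk : k ≤ r) :
    (descProd σ 1 r * σ 1) ^ k = descProd σ 1 r ^ k * descProd σ 1 k := by
  induction k with
  | zero => simp [descProd_of_lt σ Nat.zero_lt_one]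
  | succ k ih =>
    have hmove : descProd σ 1 k * descProd σ 1 r = descProd σ 1 r * descProd σ 2 (k + 1) :=
      (hσ.semiconjBy_descProd_descProd le_rfl le_rfl (by omega) le_rfl).eq.symm
    rw [pow_succ, ih (by omega), mul_assoc, ← mul_assoc (descProd σ 1 k), hmove,
      descProd_eq_descProd_succ_mul σ (by omega : 1 ≤ k + 1), pow_succ]
    simp only [mul_assoc]

theorem descProd_mul_sq_pow_eq_garsideElement_sq :
    (descProd σ 2 r * σ 1 ^ 2) ^ r = garsideElement σ 1 r ^ 2 := by
  obtain rfl | hr := Nat.eq_zero_or_pos r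
  · simp [garsideElement]
  have hε : descProd σ 2 r * σ 1 ^ 2 = descProd σ 1 r * σ 1 := by
    rw [descProd_eq_descProd_succ_mul σ hr, sq, mul_assoc]
  rw [hε, hσ.descProd_mul_pow le_rfl, ← pow_succ, hσ.descProd_pow_succ le_rfl,
    List.prod_range_succ, descProd_of_lt σ (by omega : r < 1 + r), mul_one,
    ← hσ.garsideElement_eq_prod_descProd le_rfl (add_comm 1 r), sq]

end BraidRelations

theorem pow_mul_eq_pow_of_conj_recursion {G : Type*} [Group G] {x a y : G} (hxa : Commute x a)
    {t : ℤ → G} (ht : ∀ i : ℤ, t i = x ^ (-(2 * i)) * y * x ^ (2 * i)) {P : ℕ → G}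
    (hP0 : P 0 = 1) (hPsucc : ∀ k : ℕ, P (k + 1) = a * t (k + 1) * P k) (k : ℕ) :
    x ^ (2 * k) * P k = (a * y * x ^ 2) ^ k := by
  induction k with
  | zero => simp [hP0]
  | succ k ih =>
    have hx : x ^ (2 * (k + 1)) = x ^ (2 * ((k + 1 : ℕ) : ℤ)) := by
      rw [← zpow_natCast]; push_cast; rfl
    rw [hPsucc, ht, hx, pow_succ', ← ih, ← mul_assoc, ← mul_assoc, ((hxa.zpow_left _).eq)]
    group

theorem stmt14_general {M : Type*} [Group M] (r e : ℕ) (hr : 2 ≤ r) (σ : ℕ → M)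
    (hcomm : ∀ i j : ℕ, 1 ≤ i → i + 1 < j → j ≤ r → σ i * σ j = σ j * σ i)
    (hbraid : ∀ i : ℕ, 1 ≤ i → i + 1 ≤ r →
      σ i * σ (i + 1) * σ i = σ (i + 1) * σ i * σ (i + 1))
    (A ε Δ : M) (hA : A = descProd σ 3 r) (hε : ε = descProd σ 2 r * σ 1 ^ 2)
    (hΔ : Δ = ((List.range r).map (fun k => descProd σ 1 (k + 1))).prod)
    (t : ℤ → M) (ht : ∀ i : ℤ, t i = σ 1 ^ (-(2 * i)) * σ 2 * σ 1 ^ (2 * i))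
    (P : ℕ → M) (hP0 : P 0 = 1)
    (hPsucc : ∀ k : ℕ, P (k + 1) = A * t (k + 1) * P k)
    (lam : M) (hlam : lam = σ 1 ^ (2 * e) * P e) :
    lam = ε ^ e ∧ lam ^ (r / Nat.gcd e r) = (Δ ^ 2) ^ (e / Nat.gcd e r) := by
  have hσ1A : Commute (σ 1) A :=
    hA ▸ commute_descProd σ fun k h3k hkr => hcomm 1 k le_rfl (by omega) hkr
  have hεA : ε = A * σ 2 * σ 1 ^ 2 := by
    rw [hε, hA, descProd_eq_descProd_succ_mul σ hr]
  have hlam_eq : lam = ε ^ e := by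
    rw [hlam, pow_mul_eq_pow_of_conj_recursion hσ1A ht hP0 hPsucc, hεA]
  have hεr : ε ^ r = Δ ^ 2 := by
    rw [hε, hΔ, (BraidRelations.mk hcomm hbraid).descProd_mul_sq_pow_eq_garsideElement_sq,
    garsideElement]
  refine ⟨hlam_eq, ?_⟩
  rw [hlam_eq, ← pow_mul, ← hεr, ← pow_mul, ← Nat.mul_div_assoc _ (Nat.gcd_dvd_right e r),
    ← Nat.mul_div_assoc _ (Nat.gcd_dvd_left e r), mul_comm]

/-- In the braid group `B_{r+1}` (any group with braid relations), set
`lam = σ 1 ^ (2e) * (A * t e) * (A * t (e-1)) * ⋯ * (A * t 1)`.  Then `lam = ε ^ e`,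
and consequently `lam ^ (r / gcd e r) = (Δ ^ 2) ^ (e / gcd e r)`. -/
theorem stmt14 {M : Type*} [Group M] (r e : ℕ) (hr : 2 ≤ r) (he : 1 ≤ e) (σ : ℕ → M)
    (hcomm : ∀ i j : ℕ, 1 ≤ i → i + 1 < j → j ≤ r → σ i * σ j = σ j * σ i)
    (hbraid : ∀ i : ℕ, 1 ≤ i → i + 1 ≤ r →
      σ i * σ (i + 1) * σ i = σ (i + 1) * σ i * σ (i + 1))
    (A ε Δ : M) (hA : A = descProd σ 3 r) (hε : ε = descProd σ 2 r * σ 1 ^ 2)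
    (hΔ : Δ = ((List.range r).map (fun k => descProd σ 1 (k + 1))).prod)
    (t : ℤ → M) (ht : ∀ i : ℤ, t i = σ 1 ^ (-(2 * i)) * σ 2 * σ 1 ^ (2 * i))
    (P : ℕ → M) (hP0 : P 0 = 1)
    (hPsucc : ∀ k : ℕ, P (k + 1) = A * t (k + 1) * P k)
    (lam : M) (hlam : lam = σ 1 ^ (2 * e) * P e) :
    lam = ε ^ e ∧ lam ^ (r / Nat.gcd e r) = (Δ ^ 2) ^ (e / Nat.gcd e r) :=
  stmt14_general r e hr σ hcomm hbraid A ε Δ hA hε hΔ t ht P hP0 hPsucc lam hlam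
end

section
/- In the braid group B_{r+1} (r ≥ 3), the element s_1 B commutes with σ_1, where s_1 = A σ_1^{-2} σ_2 σ_1² A^{-1}, A = σ_r ⋯ σ_3, and B = A σ_2 = σ_r σ_{r-1} ⋯ σ_2. -/
/-- In the braid group `B_{r+1}` (`r ≥ 3`), the element `s₁ * B` commutes with `σ 1`,
where `s₁ = A * σ 1 ^ (-2) * σ 2 * σ 1 ^ 2 * A⁻¹`, `A = σ r ⋯ σ 3`, `B = A * σ 2`. -/
theorem stmt15 {M : Type*} [Group M] (r : ℕ) (hr : 3 ≤ r) (σ : ℕ → M)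
    (hcomm : ∀ i j : ℕ, 1 ≤ i → i + 1 < j → j ≤ r → σ i * σ j = σ j * σ i)
    (hbraid : ∀ i : ℕ, 1 ≤ i → i + 1 ≤ r →
      σ i * σ (i + 1) * σ i = σ (i + 1) * σ i * σ (i + 1))
    (A B s₁ : M) (hA : A = descProd σ 3 r) (hB : B = A * σ 2)
    (hs₁ : s₁ = A * σ 1 ^ (-2 : ℤ) * σ 2 * σ 1 ^ 2 * A⁻¹) :
    (s₁ * B) * σ 1 = σ 1 * (s₁ * B) := by
  -- σ 1 commutes with A
  have h1A : Commute (σ 1) A := by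
    rw [hA, descProd]
    apply Commute.list_prod_right
    intro y hy
    simp only [List.mem_map, List.mem_reverse, List.mem_range'] at hy
    obtain ⟨j, hj, rfl⟩ := hy
    obtain ⟨i, hi, rfl⟩ := hj
    show σ 1 * σ _ = σ _ * σ 1
    exact hcomm 1 _ le_rfl (by omega) (by omega)
  -- braid relation at 1
  have hb : σ 1 * σ 2 * σ 1 = σ 2 * σ 1 * σ 2 := hbraid 1 le_rfl (by omega)
  -- σ 1 commutes with σ 2 * σ 1 ^ 2 * σ 2
  have key : Commute (σ 1) (σ 2 * σ 1 ^ 2 * σ 2) := by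
    show σ 1 * _ = _ * σ 1
    calc σ 1 * (σ 2 * σ 1 ^ 2 * σ 2) = (σ 1 * σ 2 * σ 1) * (σ 1 * σ 2) := by
          rw [pow_two]; group
      _ = σ 2 * σ 1 * (σ 2 * σ 1 * σ 2) := by rw [hb]; group
      _ = σ 2 * σ 1 * (σ 1 * σ 2 * σ 1) := by rw [hb]
      _ = σ 2 * σ 1 ^ 2 * σ 2 * σ 1 := by rw [pow_two]; group
  have hX : Commute (σ 1) (σ 1 ^ (-2 : ℤ) * (σ 2 * σ 1 ^ 2 * σ 2)) :=
    (Commute.zpow_right (Commute.refl _) _).mul_right key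
  have hSB : s₁ * B = A * (σ 1 ^ (-2 : ℤ) * (σ 2 * σ 1 ^ 2 * σ 2)) := by
    rw [hs₁, hB]; group
  rw [hSB]
  exact (h1A.mul_right hX).eq.symm
end

section
/- In the Artin braid group B_{r+1} (r ≥ 3), conjugation by ε = σ_r ⋯ σ_2 σ_1² cyclically permutes the affine generators: ε^{-1} s_j ε = s_{j+1} for 1 ≤ j ≤ r−1 and ε^{-1} s_r ε = s_1, where s_1 = A σ_1^{-2} σ_2 σ_1² A^{-1} with A = σ_r ⋯ σ_3, and s_j = σ_j for 2 ≤ j ≤ r. -/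
namespace Stmt19Aux

variable {M : Type*} [Monoid M]

lemma descProd_nil (σ : ℕ → M) (a b : ℕ) (h : b + 1 ≤ a) : descProd σ a b = 1 := by
  unfold descProd
  rw [show b + 1 - a = 0 by omega]
  simp

lemma descProd_top (σ : ℕ → M) (a b : ℕ) (h : a ≤ b + 1) :
    descProd σ a (b + 1) = σ (b + 1) * descProd σ a b := by
  unfold descProd
  rw [show b + 1 + 1 - a = (b + 1 - a) + 1 by omega, List.range'_concat]
  simp only [List.reverse_append, List.reverse_cons, List.reverse_nil, List.nil_append,
    List.map_cons, List.map_nil, List.prod_cons, List.singleton_append, one_mul,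
    List.map_append, List.prod_nil]
  rw [show a + (b + 1 - a) = b + 1 by omega]

lemma descProd_bot (σ : ℕ → M) (a b : ℕ) (h : a ≤ b) :
    descProd σ a b = descProd σ (a + 1) b * σ a := by
  unfold descProd
  rw [show b + 1 - a = (b - a) + 1 by omega, List.range'_succ,
    show b + 1 - (a + 1) = b - a by omega]
  simp

lemma descProd_commute (σ : ℕ → M) (x : M) (a b : ℕ)
    (h : ∀ k, a ≤ k → k ≤ b → Commute x (σ k)) : Commute x (descProd σ a b) := by
  unfold descProd
  apply Commute.list_prod_right
  intro y hy
  simp only [List.mem_map, List.mem_reverse] at hy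
  obtain ⟨k, hk, rfl⟩ := hy
  rw [List.mem_range'] at hk
  obtain ⟨i, hi, rfl⟩ := hk
  exact h _ (by omega) (by omega)

section GroupPart

variable {M : Type*} [Group M]

lemma shift (r : ℕ) (σ : ℕ → M)
    (hcomm : ∀ i j : ℕ, 1 ≤ i → i + 1 < j → j ≤ r → σ i * σ j = σ j * σ i)
    (hbraid : ∀ i : ℕ, 1 ≤ i → i + 1 ≤ r →
      σ i * σ (i + 1) * σ i = σ (i + 1) * σ i * σ (i + 1))
    (a j b : ℕ) (ha : 1 ≤ a) (haj : a ≤ j) (hjb : j < b) (hbr : b ≤ r) :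
    σ j * descProd σ a b = descProd σ a b * σ (j + 1) := by
  have H : ∀ b, j + 1 ≤ b → b ≤ r →
      σ j * descProd σ a b = descProd σ a b * σ (j + 1) := by
    intro b hb
    induction b, hb using Nat.le_induction with
    | base =>
      intro hbr
      obtain ⟨k, rfl⟩ : ∃ k, j = k + 1 := ⟨j - 1, by omega⟩
      have h1 : descProd σ a (k + 1 + 1) = σ (k + 2) * descProd σ a (k + 1) :=
        descProd_top σ a (k + 1) (by omega)
      have h2 : descProd σ a (k + 1) = σ (k + 1) * descProd σ a k :=
        descProd_top σ a k (by omega)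
      have hC : σ (k + 2) * descProd σ a k = descProd σ a k * σ (k + 2) := by
        refine (descProd_commute σ (σ (k + 2)) a k fun m h1 h2 => ?_).eq
        exact (hcomm m (k + 2) (by omega) (by omega) (by omega)).symm
      have hb : σ (k + 1) * σ (k + 2) * σ (k + 1) = σ (k + 2) * σ (k + 1) * σ (k + 2) :=
        hbraid (k + 1) (by omega) (by omega)
      rw [h1, h2]
      calc σ (k + 1) * (σ (k + 2) * (σ (k + 1) * descProd σ a k))
          = (σ (k + 1) * σ (k + 2) * σ (k + 1)) * descProd σ a k := by group
        _ = (σ (k + 2) * σ (k + 1) * σ (k + 2)) * descProd σ a k := by rw [hb]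
        _ = σ (k + 2) * σ (k + 1) * (σ (k + 2) * descProd σ a k) := by group
        _ = σ (k + 2) * σ (k + 1) * (descProd σ a k * σ (k + 2)) := by rw [hC]
        _ = (σ (k + 2) * (σ (k + 1) * descProd σ a k)) * σ (k + 2) := by group
    | succ b hb ih =>
      intro hbr
      rw [descProd_top σ a b (by omega)]
      have hc : σ j * σ (b + 1) = σ (b + 1) * σ j :=
        hcomm j (b + 1) (by omega) (by omega) hbr
      calc σ j * (σ (b + 1) * descProd σ a b)
          = (σ j * σ (b + 1)) * descProd σ a b := by group
        _ = (σ (b + 1) * σ j) * descProd σ a b := by rw [hc]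
        _ = σ (b + 1) * (σ j * descProd σ a b) := by group
        _ = σ (b + 1) * (descProd σ a b * σ (j + 1)) := by rw [ih (by omega)]
        _ = σ (b + 1) * descProd σ a b * σ (j + 1) := by group
  exact H b hjb hbr

lemma abstract_step (sr sa sa1 E P : M)
    (hE : E = P * sa1) (hC : sa * P = P * sa)
    (hb : sa * sa1 * sa = sa1 * sa * sa1)
    (ih : sr * E * P = E * E) :
    sr * (E * sa) * E = (E * sa) * (E * sa) := by
  subst hE
  have h1 : sr * (P * sa1 * sa) * (P * sa1)
      = ((P * sa1) * (P * sa1)) * (sa * sa1) := by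
    calc sr * (P * sa1 * sa) * (P * sa1)
        = sr * (P * sa1) * ((sa * P) * sa1) := by group
      _ = sr * (P * sa1) * ((P * sa) * sa1) := by rw [hC]
      _ = (sr * (P * sa1) * P) * (sa * sa1) := by group
      _ = ((P * sa1) * (P * sa1)) * (sa * sa1) := by rw [ih]
  have h2 : (P * sa1 * sa) * (P * sa1 * sa)
      = ((P * sa1) * (P * sa1)) * (sa * sa1) := by
    calc (P * sa1 * sa) * (P * sa1 * sa)
        = (P * sa1) * ((sa * P) * sa1) * sa := by group
      _ = (P * sa1) * ((P * sa) * sa1) * sa := by rw [hC]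
      _ = (P * sa1) * P * (sa * sa1 * sa) := by group
      _ = (P * sa1) * P * (sa1 * sa * sa1) := by rw [hb]
      _ = ((P * sa1) * (P * sa1)) * (sa * sa1) := by group
  exact h1.trans h2.symm

lemma sqlem (r : ℕ) (σ : ℕ → M)
    (hcomm : ∀ i j : ℕ, 1 ≤ i → i + 1 < j → j ≤ r → σ i * σ j = σ j * σ i)
    (hbraid : ∀ i : ℕ, 1 ≤ i → i + 1 ≤ r →
      σ i * σ (i + 1) * σ i = σ (i + 1) * σ i * σ (i + 1))
    (a : ℕ) (ha : 1 ≤ a) (har : a ≤ r) :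
    σ r * descProd σ a r * descProd σ (a + 1) r = descProd σ a r * descProd σ a r := by
  obtain ⟨k, hk⟩ : ∃ k, a + k = r := ⟨r - a, by omega⟩
  induction k generalizing a with
  | zero =>
    have ha' : a = r := by omega
    subst ha'
    have h1 : descProd σ a a = σ a := by
      rw [descProd_bot σ a a le_rfl, descProd_nil σ (a + 1) a (by omega), one_mul]
    rw [h1, descProd_nil σ (a + 1) a (by omega), mul_one]
  | succ k ih =>
    have har' : a + 1 ≤ r := by omega
    have ihh := ih (a + 1) (by omega) har' (by omega)
    have hE : descProd σ (a + 1) r = descProd σ (a + 2) r * σ (a + 1) :=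
      descProd_bot σ (a + 1) r har'
    have hC : σ a * descProd σ (a + 2) r = descProd σ (a + 2) r * σ a := by
      refine (descProd_commute σ (σ a) (a + 2) r fun m h1 h2 => ?_).eq
      exact hcomm a m ha (by omega) h2
    have hb : σ a * σ (a + 1) * σ a = σ (a + 1) * σ a * σ (a + 1) := hbraid a ha har'
    rw [descProd_bot σ a r har]
    exact abstract_step (σ r) (σ a) (σ (a + 1)) _ _ hE hC hb ihh

end GroupPart

end Stmt19Aux

open Stmt19Aux in
/-- In the braid group `B_{r+1}` (`r ≥ 3`), conjugation by `ε = σ r ⋯ σ 2 * σ 1 ^ 2`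
cyclically permutes the affine generators: `ε⁻¹ * s j * ε = s (j+1)` for
`1 ≤ j ≤ r - 1` and `ε⁻¹ * s r * ε = s 1`, where
`s 1 = A * σ 1 ^ (-2) * σ 2 * σ 1 ^ 2 * A⁻¹` with `A = σ r ⋯ σ 3`, and `s j = σ j`
for `2 ≤ j ≤ r`. -/
theorem stmt19 {M : Type*} [Group M] (r : ℕ) (hr : 3 ≤ r) (σ : ℕ → M)
    (hcomm : ∀ i j : ℕ, 1 ≤ i → i + 1 < j → j ≤ r → σ i * σ j = σ j * σ i)
    (hbraid : ∀ i : ℕ, 1 ≤ i → i + 1 ≤ r →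
      σ i * σ (i + 1) * σ i = σ (i + 1) * σ i * σ (i + 1))
    (A ε : M) (hA : A = descProd σ 3 r) (hε : ε = descProd σ 2 r * σ 1 ^ 2)
    (s : ℕ → M) (hs1 : s 1 = A * σ 1 ^ (-2 : ℤ) * σ 2 * σ 1 ^ 2 * A⁻¹)
    (hsj : ∀ j : ℕ, 2 ≤ j → j ≤ r → s j = σ j) :
    (∀ j : ℕ, 1 ≤ j → j ≤ r - 1 → ε⁻¹ * s j * ε = s (j + 1)) ∧
      ε⁻¹ * s r * ε = s 1 := by
  have hD : descProd σ 2 r = A * σ 2 := by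
    rw [hA]; exact descProd_bot σ 2 r (by omega)
  have hεA : ε = A * σ 2 * σ 1 ^ 2 := by rw [hε, hD]
  have hb1 : σ 1 * σ 2 * σ 1 = σ 2 * σ 1 * σ 2 := hbraid 1 le_rfl (by omega)
  have hcA : Commute (σ 1) A := by
    rw [hA]
    exact descProd_commute σ (σ 1) 3 r fun k h1 h2 => hcomm 1 k le_rfl (by omega) h2
  have hcA2 : σ 1 ^ 2 * A = A * σ 1 ^ 2 := (hcA.pow_left 2).eq
  have hcA2i : σ 1 ^ 2 * A⁻¹ = A⁻¹ * σ 1 ^ 2 := ((hcA.pow_left 2).inv_right).eq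
  have key : σ 2 * σ 1 ^ 2 * σ 2 * σ 1 ^ 2 = σ 1 ^ 2 * σ 2 * σ 1 ^ 2 * σ 2 := by
    have h1 : σ 2 * σ 1 ^ 2 * σ 2 * σ 1 ^ 2 = (σ 1 * σ 2 * σ 1) * (σ 1 * σ 2 * σ 1) := by
      calc σ 2 * σ 1 ^ 2 * σ 2 * σ 1 ^ 2
          = σ 2 * σ 1 * (σ 1 * σ 2 * σ 1) * σ 1 := by rw [pow_two]; group
        _ = σ 2 * σ 1 * (σ 2 * σ 1 * σ 2) * σ 1 := by rw [hb1]
        _ = (σ 2 * σ 1 * σ 2) * (σ 1 * σ 2 * σ 1) := by group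
        _ = (σ 1 * σ 2 * σ 1) * (σ 1 * σ 2 * σ 1) := by rw [← hb1]
    have h2 : σ 1 ^ 2 * σ 2 * σ 1 ^ 2 * σ 2 = (σ 1 * σ 2 * σ 1) * (σ 1 * σ 2 * σ 1) := by
      calc σ 1 ^ 2 * σ 2 * σ 1 ^ 2 * σ 2
          = σ 1 * (σ 1 * σ 2 * σ 1) * (σ 1 * σ 2) := by rw [pow_two]; group
        _ = σ 1 * (σ 2 * σ 1 * σ 2) * (σ 1 * σ 2) := by rw [hb1]
        _ = (σ 1 * σ 2 * σ 1) * (σ 2 * σ 1 * σ 2) := by group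
        _ = (σ 1 * σ 2 * σ 1) * (σ 1 * σ 2 * σ 1) := by rw [← hb1]
    exact h1.trans h2.symm
  constructor
  · intro j hj1 hjr
    rcases Nat.lt_or_ge j 2 with hj2 | hj2
    · -- j = 1
      have hj : j = 1 := by omega
      subst hj
      rw [hsj 2 le_rfl (by omega)]
      have h : s 1 * ε = ε * σ 2 := by
        rw [hs1, hεA]
        calc A * σ 1 ^ (-2 : ℤ) * σ 2 * σ 1 ^ 2 * A⁻¹ * (A * σ 2 * σ 1 ^ 2)
            = A * (σ 1 ^ (-2 : ℤ) * (σ 2 * σ 1 ^ 2 * σ 2 * σ 1 ^ 2)) := by group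
          _ = A * (σ 1 ^ (-2 : ℤ) * (σ 1 ^ 2 * σ 2 * σ 1 ^ 2 * σ 2)) := by rw [key]
          _ = A * σ 2 * σ 1 ^ 2 * σ 2 := by group
      calc ε⁻¹ * s 1 * ε = ε⁻¹ * (s 1 * ε) := by group
        _ = ε⁻¹ * (ε * σ 2) := by rw [h]
        _ = σ 2 := by group
    · -- 2 ≤ j
      rw [hsj j hj2 (by omega), hsj (j + 1) (by omega) (by omega)]
      have hsh : σ j * descProd σ 2 r = descProd σ 2 r * σ (j + 1) :=
        shift r σ hcomm hbraid 2 j r (by omega) hj2 (by omega) le_rfl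
      have hcj : Commute (σ 1) (σ (j + 1)) := hcomm 1 (j + 1) le_rfl (by omega) (by omega)
      have hc2 : σ (j + 1) * σ 1 ^ 2 = σ 1 ^ 2 * σ (j + 1) := (hcj.symm.pow_right 2).eq
      have h : σ j * ε = ε * σ (j + 1) := by
        rw [hε]
        calc σ j * (descProd σ 2 r * σ 1 ^ 2)
            = (σ j * descProd σ 2 r) * σ 1 ^ 2 := by group
          _ = (descProd σ 2 r * σ (j + 1)) * σ 1 ^ 2 := by rw [hsh]
          _ = descProd σ 2 r * (σ (j + 1) * σ 1 ^ 2) := by group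
          _ = descProd σ 2 r * (σ 1 ^ 2 * σ (j + 1)) := by rw [hc2]
          _ = descProd σ 2 r * σ 1 ^ 2 * σ (j + 1) := by group
      calc ε⁻¹ * σ j * ε = ε⁻¹ * (σ j * ε) := by group
        _ = ε⁻¹ * (ε * σ (j + 1)) := by rw [h]
        _ = σ (j + 1) := by group
  · have hsq := sqlem r σ hcomm hbraid 2 (by omega) (by omega)
    rw [← hA, hD] at hsq
    -- hsq : σ r * (A * σ 2) * A = (A * σ 2) * (A * σ 2)
    have h : σ r * ε = ε * s 1 := by
      rw [hεA, hs1]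
      have h2 : (A * σ 2 * σ 1 ^ 2) * (A * σ 1 ^ (-2 : ℤ) * σ 2 * σ 1 ^ 2 * A⁻¹)
          = σ r * (A * σ 2 * σ 1 ^ 2) := by
        calc (A * σ 2 * σ 1 ^ 2) * (A * σ 1 ^ (-2 : ℤ) * σ 2 * σ 1 ^ 2 * A⁻¹)
            = (A * σ 2) * (σ 1 ^ 2 * A) * (σ 1 ^ (-2 : ℤ) * σ 2 * σ 1 ^ 2 * A⁻¹) := by group
          _ = (A * σ 2) * (A * σ 1 ^ 2) * (σ 1 ^ (-2 : ℤ) * σ 2 * σ 1 ^ 2 * A⁻¹) := by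
              rw [hcA2]
          _ = (A * σ 2) * A * (σ 2 * (σ 1 ^ 2 * A⁻¹)) := by group
          _ = (A * σ 2) * A * (σ 2 * (A⁻¹ * σ 1 ^ 2)) := by rw [hcA2i]
          _ = ((A * σ 2) * (A * σ 2)) * (A⁻¹ * σ 1 ^ 2) := by group
          _ = (σ r * (A * σ 2) * A) * (A⁻¹ * σ 1 ^ 2) := by rw [← hsq]
          _ = σ r * (A * σ 2 * σ 1 ^ 2) := by group
      exact h2.symm
    rw [hsj r (by omega) le_rfl]
    calc ε⁻¹ * σ r * ε = ε⁻¹ * (σ r * ε) := by group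
      _ = ε⁻¹ * (ε * s 1) := by rw [h]
      _ = s 1 := by group
end
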